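/- arXiv:2109.14727 — 10 statements merged into one kernel-verified Lean document; each statement's English description precedes it below -/
import Mathlib

section
/- Monotonicity under the direct parametrization (Theorem 1a): for a finite MDP, any sequence of policies (π_t) generated by direct-parametrization policy updates with exact value functions satisfies, for all t, all states s and all actions a, v_{t+1}(s) ≥ v_t(s) and q_{t+1}(s,a) ≥ q_t(s,a). -/
open Finset Filter

/-- A stationary stochastic policy on a finite MDP: `π s` is a probability
distribution on actions for each state `s`. -/
def IsPolicy {S A : Type*} [Fintype A] (π : S → A → ℝ) : Prop :=
  (∀ s a, 0 ≤ π s a) ∧ ∀ s, ∑ a, π s a = 1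

/-- `v` is the state value function of policy `π` (Bellman equation). -/
def IsValueOf {S A : Type*} [Fintype S] [Fintype A]
    (p : S → A → S → ℝ) (r : S → A → ℝ) (γ : ℝ)
    (π : S → A → ℝ) (v : S → ℝ) : Prop :=
  ∀ s, v s = ∑ a, π s a * (r s a + γ * ∑ s', p s a s' * v s')

/-- Policy improvement: if the one-step lookahead of `π'` on `v` dominates `v`,
then the value of `π'` dominates `v`. -/
lemma improve {S A : Type*} [Fintype S] [Nonempty S] [Fintype A]
    (p : S → A → S → ℝ) (hp : ∀ s a s', 0 ≤ p s a s')
    (hpsum : ∀ s a, ∑ s', p s a s' = 1)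
    (r : S → A → ℝ) (γ : ℝ) (hγ0 : 0 ≤ γ) (hγ1 : γ < 1)
    (π' : S → A → ℝ) (hπ' : IsPolicy π')
    (v v' : S → ℝ) (hv' : IsValueOf p r γ π' v')
    (h : ∀ s, v s ≤ ∑ a, π' s a * (r s a + γ * ∑ s', p s a s' * v s')) :
    ∀ s, v s ≤ v' s := by
  obtain ⟨s₀, -, hs₀⟩ := Finset.exists_min_image Finset.univ (fun s => v' s - v s)
    ⟨Classical.arbitrary S, Finset.mem_univ _⟩
  set m := v' s₀ - v s₀ with hm_def
  have hm : ∀ s, m ≤ v' s - v s := fun s => hs₀ s (Finset.mem_univ s)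
  suffices hm0 : 0 ≤ m by intro s; linarith [hm s]
  have key : γ * m ≤ m := by
    have h1 : v s₀ ≤ ∑ a, π' s₀ a * (r s₀ a + γ * ∑ s', p s₀ a s' * v s') := h s₀
    have h2 : v' s₀ = ∑ a, π' s₀ a * (r s₀ a + γ * ∑ s', p s₀ a s' * v' s') := hv' s₀
    have h3 : ∀ a, γ * m ≤ γ * ∑ s', p s₀ a s' * (v' s' - v s') := by
      intro a
      apply mul_le_mul_of_nonneg_left _ hγ0
      calc m = ∑ s', p s₀ a s' * m := by rw [← Finset.sum_mul, hpsum, one_mul]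
        _ ≤ ∑ s', p s₀ a s' * (v' s' - v s') :=
          Finset.sum_le_sum fun s' _ => mul_le_mul_of_nonneg_left (hm s') (hp s₀ a s')
    have h4 : ∑ a, π' s₀ a * (r s₀ a + γ * ∑ s', p s₀ a s' * v' s')
            - ∑ a, π' s₀ a * (r s₀ a + γ * ∑ s', p s₀ a s' * v s')
            = ∑ a, π' s₀ a * (γ * ∑ s', p s₀ a s' * (v' s' - v s')) := by
      rw [← Finset.sum_sub_distrib]
      refine Finset.sum_congr rfl fun a _ => ?_
      have hsub : ∑ s', p s₀ a s' * (v' s' - v s')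
          = ∑ s', p s₀ a s' * v' s' - ∑ s', p s₀ a s' * v s' := by
        rw [← Finset.sum_sub_distrib]
        exact Finset.sum_congr rfl fun s' _ => by ring
      rw [hsub]; ring
    have h5 : ∑ a, π' s₀ a * (γ * m)
        ≤ ∑ a, π' s₀ a * (γ * ∑ s', p s₀ a s' * (v' s' - v s')) :=
      Finset.sum_le_sum fun a _ => mul_le_mul_of_nonneg_left (h3 a) (hπ'.1 s₀ a)
    have h6 : ∑ a, π' s₀ a * (γ * m) = γ * m := by
      rw [← Finset.sum_mul, hπ'.2, one_mul]
    linarith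
  nlinarith [key, hγ1]

/-- **Monotonicity under the direct parametrization** (Theorem 1a):
any sequence of policies generated by direct-parametrization policy updates
(Euclidean projection onto the simplex of `π_t + η_t d_t(s) q_t(s,·)`) with
exact value functions has monotonically increasing values `v_t` and `q_t`. -/
theorem monotonicity_direct
    {S A : Type*} [Fintype S] [Nonempty S] [Fintype A] [Nonempty A]
    (p : S → A → S → ℝ) (hp : ∀ s a s', 0 ≤ p s a s')
    (hpsum : ∀ s a, ∑ s', p s a s' = 1)
    (r : S → A → ℝ) (γ : ℝ) (hγ0 : 0 ≤ γ) (hγ1 : γ < 1)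
    (η : ℕ → ℝ) (hη : ∀ t, 0 < η t)
    (d : ℕ → S → ℝ) (hd : ∀ t s, 0 < d t s)
    (π : ℕ → S → A → ℝ) (hπ : ∀ t, IsPolicy (π t))
    (v : ℕ → S → ℝ) (hv : ∀ t, IsValueOf p r γ (π t) (v t))
    (q : ℕ → S → A → ℝ)
    (hq : ∀ t s a, q t s a = r s a + γ * ∑ s', p s a s' * v t s')
    -- `π (t+1) (·|s)` is the Euclidean projection of
    -- `π t (·|s) + η t * d t s * q t (s, ·)` onto the simplex:
    (hproj : ∀ t s, ∀ w : A → ℝ, (∀ a, 0 ≤ w a) → ∑ a, w a = 1 →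
        ∑ a, (π (t + 1) s a - (π t s a + η t * d t s * q t s a)) ^ 2
          ≤ ∑ a, (w a - (π t s a + η t * d t s * q t s a)) ^ 2) :
    ∀ t s a, v t s ≤ v (t + 1) s ∧ q t s a ≤ q (t + 1) s a := by
  intro t
  -- Step 1: from the projection inequality, π_{t+1} improves on q_t at every state.
  have step1 : ∀ s, v t s ≤ ∑ a, π (t + 1) s a * (r s a + γ * ∑ s', p s a s' * v t s') := by
    intro s
    set c := η t * d t s with hc_def
    have hc : 0 < c := mul_pos (hη t) (hd t s)
    have hproj' := hproj t s (π t s) (fun a => (hπ t).1 s a) ((hπ t).2 s)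
    -- ⟨π_{t+1} - π_t, q_t⟩ ≥ 0
    have key : 0 ≤ ∑ a, (π (t + 1) s a - π t s a) * q t s a := by
      have expand : ∀ a : A, (π (t + 1) s a - (π t s a + c * q t s a)) ^ 2
          = (π (t + 1) s a - π t s a) ^ 2
            - 2 * c * ((π (t + 1) s a - π t s a) * q t s a) + (c * q t s a) ^ 2 := by
        intro a; ring
      have expand' : ∀ a : A, (π t s a - (π t s a + c * q t s a)) ^ 2
          = (c * q t s a) ^ 2 := by intro a; ring
      have hL : ∑ a, (π (t + 1) s a - (π t s a + c * q t s a)) ^ 2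
          = ∑ a, (π (t + 1) s a - π t s a) ^ 2
            - 2 * c * ∑ a, (π (t + 1) s a - π t s a) * q t s a
            + ∑ a, (c * q t s a) ^ 2 := by
        rw [Finset.mul_sum, ← Finset.sum_sub_distrib, ← Finset.sum_add_distrib]
        exact Finset.sum_congr rfl fun a _ => expand a
      have hR : ∑ a, (π t s a - (π t s a + c * q t s a)) ^ 2
          = ∑ a, (c * q t s a) ^ 2 :=
        Finset.sum_congr rfl fun a _ => expand' a
      have hsq : 0 ≤ ∑ a, (π (t + 1) s a - π t s a) ^ 2 :=
        Finset.sum_nonneg fun a _ => sq_nonneg _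
      rw [hL, hR] at hproj'
      nlinarith [hproj', hsq, hc]
    have hvq : v t s = ∑ a, π t s a * q t s a := by
      rw [hv t s]
      exact Finset.sum_congr rfl fun a _ => by rw [hq t s a]
    have hrq : ∑ a, π (t + 1) s a * (r s a + γ * ∑ s', p s a s' * v t s')
        = ∑ a, π (t + 1) s a * q t s a :=
      Finset.sum_congr rfl fun a _ => by rw [hq t s a]
    have hdiff : ∑ a, π (t + 1) s a * q t s a - ∑ a, π t s a * q t s a
        = ∑ a, (π (t + 1) s a - π t s a) * q t s a := by
      rw [← Finset.sum_sub_distrib]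
      exact Finset.sum_congr rfl fun a _ => by ring
    rw [hvq, hrq]
    linarith [key, hdiff]
  have hvmono : ∀ s, v t s ≤ v (t + 1) s :=
    improve p hp hpsum r γ hγ0 hγ1 (π (t + 1)) (hπ (t + 1)) (v t) (v (t + 1))
      (hv (t + 1)) step1
  intro s a
  refine ⟨hvmono s, ?_⟩
  rw [hq t s a, hq (t + 1) s a]
  have : ∑ s', p s a s' * v t s' ≤ ∑ s', p s a s' * v (t + 1) s' :=
    Finset.sum_le_sum fun s' _ => mul_le_mul_of_nonneg_left (hvmono s') (hp s a s')
  nlinarith [this, hγ0]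
end

section
/- Monotonicity under the softmax parametrization (Theorem 1b): for a finite MDP, any sequence of policies (π_t) generated by softmax-parametrization policy updates with exact value functions satisfies, for all t, all states s and all actions a, v_{t+1}(s) ≥ v_t(s) and q_{t+1}(s,a) ≥ q_t(s,a). -/
open Finset Filter

/-- The softmax policy associated with parameters `θ`. -/
noncomputable def softmaxPol {S A : Type*} [Fintype A] (θ : S → A → ℝ) (s : S) (a : A) : ℝ :=
  Real.exp (θ s a) / ∑ a', Real.exp (θ s a')

/-!
Along the gradient step the logit of each action moves by a nonnegative multiple of its advantage
`q t s a - v t s`, so actions with positive advantage gain probability and the others lose it;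
hence the new policy has nonnegative expected advantage under `q t`. By the policy improvement
theorem (a minimum-principle argument on `v (t+1) - v t`, using `γ < 1`) this gives
`v t ≤ v (t+1)`, and `q` inherits the monotonicity through the nonnegative transition kernel.
-/

lemma le_sum_mul_of_forall_le {ι : Type*} [Fintype ι] {μ u : ι → ℝ} {m : ℝ}
    (hμ0 : ∀ i, 0 ≤ μ i) (hμ1 : ∑ i, μ i = 1) (h : ∀ i, m ≤ u i) :
    m ≤ ∑ i, μ i * u i :=
  calc m = ∑ i, μ i * m := by rw [← sum_mul, hμ1, one_mul]
    _ ≤ ∑ i, μ i * u i := sum_le_sum fun i _ => mul_le_mul_of_nonneg_left (h i) (hμ0 i)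

lemma le_exp_mul_mul_self {c : ℝ} (hc : 0 ≤ c) (x : ℝ) : x ≤ Real.exp (c * x) * x := by
  rcases le_total 0 x with hx | hx
  · nlinarith [Real.add_one_le_exp (c * x), mul_nonneg hc (sq_nonneg x)]
  · have : Real.exp (c * x) ≤ 1 := Real.exp_le_one_iff.mpr (mul_nonpos_of_nonneg_of_nonpos hc hx)
    nlinarith

section Softmax

variable {S A : Type*} [Fintype A]

lemma softmaxPol_nonneg (θ : S → A → ℝ) (s : S) (a : A) : 0 ≤ softmaxPol θ s a := by
  unfold softmaxPol
  positivity

lemma sum_softmaxPol_mul (θ : S → A → ℝ) (s : S) (f : A → ℝ) :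
    ∑ a, softmaxPol θ s a * f a = (∑ a, Real.exp (θ s a) * f a) / ∑ a, Real.exp (θ s a) := by
  simp only [softmaxPol, div_mul_eq_mul_div, sum_div]

variable [Nonempty A]

lemma sum_softmaxPol (θ : S → A → ℝ) (s : S) : ∑ a, softmaxPol θ s a = 1 := by
  have hZ : 0 < ∑ a, Real.exp (θ s a) := by positivity
  simpa [hZ.ne'] using sum_softmaxPol_mul θ s 1

lemma sum_softmaxPol_mul_sub (θ : S → A → ℝ) (s : S) (f : A → ℝ) (c : ℝ) :
    ∑ a, softmaxPol θ s a * (f a - c) = ∑ a, softmaxPol θ s a * f a - c := by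
  simp only [mul_sub, sum_sub_distrib, ← sum_mul, sum_softmaxPol, one_mul]

lemma sum_softmaxPol_mul_le_of_update (θ θ' : S → A → ℝ) (s : S) (f k : A → ℝ)
    (hk : ∀ a, 0 ≤ k a)
    (hθ' : ∀ a, θ' s a = θ s a + k a * (f a - ∑ b, softmaxPol θ s b * f b)) :
    ∑ a, softmaxPol θ s a * f a ≤ ∑ a, softmaxPol θ' s a * f a := by
  set m := ∑ b, softmaxPol θ s b * f b
  suffices 0 ≤ ∑ a, softmaxPol θ' s a * (f a - m) by
    rw [sum_softmaxPol_mul_sub] at this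
    linarith
  have hZ : 0 < ∑ a, Real.exp (θ s a) := by positivity
  have hcentered : ∑ a, Real.exp (θ s a) * (f a - m) = 0 := by
    have h := sum_softmaxPol_mul θ s (f · - m)
    rwa [sum_softmaxPol_mul_sub, sub_self, eq_comm, div_eq_zero_iff, or_iff_left hZ.ne'] at h
  rw [sum_softmaxPol_mul]
  refine div_nonneg ?_ (by positivity)
  calc (0 : ℝ) = ∑ a, Real.exp (θ s a) * (f a - m) := hcentered.symm
    _ ≤ ∑ a, Real.exp (θ' s a) * (f a - m) := sum_le_sum fun a _ => by
      rw [hθ', Real.exp_add, mul_assoc]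
      exact mul_le_mul_of_nonneg_left (le_exp_mul_mul_self (hk a) _) (Real.exp_pos _).le

end Softmax

theorem IsValueOf.ge_of_le_bellman {S A : Type*} [Fintype S] [Fintype A]
    {p : S → A → S → ℝ} (hp : ∀ s a s', 0 ≤ p s a s') (hpsum : ∀ s a, ∑ s', p s a s' = 1)
    {r : S → A → ℝ} {γ : ℝ} (hγ0 : 0 ≤ γ) (hγ1 : γ < 1)
    {π : S → A → ℝ} (hπ0 : ∀ s a, 0 ≤ π s a) (hπ1 : ∀ s, ∑ a, π s a = 1)
    {v u : S → ℝ} (hv : IsValueOf p r γ π v)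
    (hu : ∀ s, u s ≤ ∑ a, π s a * (r s a + γ * ∑ s', p s a s' * u s')) (s : S) :
    u s ≤ v s := by
  have : Nonempty S := ⟨s⟩
  obtain ⟨s₀, hs₀⟩ := Finite.exists_min fun s => v s - u s
  have hgap : v s₀ - ∑ a, π s₀ a * (r s₀ a + γ * ∑ s', p s₀ a s' * u s')
      = γ * ∑ a, π s₀ a * ∑ s', p s₀ a s' * (v s' - u s') := by
    rw [hv s₀, mul_sum, ← sum_sub_distrib]
    refine sum_congr rfl fun a _ => ?_
    simp only [mul_sub, sum_sub_distrib]
    ring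
  have hmean : v s₀ - u s₀ ≤ ∑ a, π s₀ a * ∑ s', p s₀ a s' * (v s' - u s') :=
    le_sum_mul_of_forall_le (hπ0 s₀) (hπ1 s₀) fun a =>
      le_sum_mul_of_forall_le (hp s₀ a) (hpsum s₀ a) hs₀
  have hmin : 0 ≤ v s₀ - u s₀ := by nlinarith [hu s₀, hgap, mul_le_mul_of_nonneg_left hmean hγ0]
  linarith [hs₀ s]

theorem monotonicity_softmax_general
    {S A : Type*} [Fintype S] [Fintype A]
    (p : S → A → S → ℝ) (hp : ∀ s a s', 0 ≤ p s a s')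
    (hpsum : ∀ s a, ∑ s', p s a s' = 1)
    (r : S → A → ℝ) (γ : ℝ) (hγ0 : 0 ≤ γ) (hγ1 : γ < 1)
    (η : ℕ → ℝ) (hη : ∀ t, 0 < η t)
    (d : ℕ → S → ℝ) (hd : ∀ t s, 0 < d t s)
    (θ : ℕ → S → A → ℝ)
    (v : ℕ → S → ℝ) (hv : ∀ t, IsValueOf p r γ (softmaxPol (θ t)) (v t))
    (q : ℕ → S → A → ℝ)
    (hq : ∀ t s a, q t s a = r s a + γ * ∑ s', p s a s' * v t s')
    (hupd : ∀ t s a, θ (t + 1) s a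
      = θ t s a + η t * d t s * softmaxPol (θ t) s a * (q t s a - v t s)) :
    ∀ t s a, v t s ≤ v (t + 1) s ∧ q t s a ≤ q (t + 1) s a := by
  intro t s a
  have : Nonempty A := ⟨a⟩
  have hvq : ∀ s, v t s = ∑ a, softmaxPol (θ t) s a * q t s a := fun s => by
    simp only [hv t s, hq]
  have himp : ∀ s, v t s ≤ ∑ a, softmaxPol (θ (t + 1)) s a * q t s a := fun s => by
    rw [hvq s]
    refine sum_softmaxPol_mul_le_of_update _ _ s _ _ (fun a => ?_) fun a => by rw [hupd, ← hvq]
    exact mul_nonneg (mul_nonneg (hη t).le (hd t s).le) (softmaxPol_nonneg _ s a)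
  have hv_mono : ∀ s, v t s ≤ v (t + 1) s :=
    (hv (t + 1)).ge_of_le_bellman hp hpsum hγ0 hγ1 (softmaxPol_nonneg _) (sum_softmaxPol _)
      fun s => by simpa only [hq] using himp s
  refine ⟨hv_mono s, ?_⟩
  rw [hq, hq]
  gcongr with s' _
  exacts [hp s a s', hv_mono s']

/-- **Monotonicity under the softmax parametrization** (Theorem 1b):
any sequence of policies generated by softmax-parametrization policy updates
with exact value functions has monotonically increasing values `v_t` and `q_t`. -/
theorem monotonicity_softmax
    {S A : Type*} [Fintype S] [Nonempty S] [Fintype A] [Nonempty A]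
    (p : S → A → S → ℝ) (hp : ∀ s a s', 0 ≤ p s a s')
    (hpsum : ∀ s a, ∑ s', p s a s' = 1)
    (r : S → A → ℝ) (γ : ℝ) (hγ0 : 0 ≤ γ) (hγ1 : γ < 1)
    (η : ℕ → ℝ) (hη : ∀ t, 0 < η t)
    (d : ℕ → S → ℝ) (hd : ∀ t s, 0 < d t s)
    (θ : ℕ → S → A → ℝ)
    (v : ℕ → S → ℝ) (hv : ∀ t, IsValueOf p r γ (softmaxPol (θ t)) (v t))
    (q : ℕ → S → A → ℝ)
    (hq : ∀ t s a, q t s a = r s a + γ * ∑ s', p s a s' * v t s')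
    (hupd : ∀ t s a, θ (t + 1) s a
      = θ t s a + η t * d t s * softmaxPol (θ t) s a * (q t s a - v t s)) :
    ∀ t s a, v t s ≤ v (t + 1) s ∧ q t s a ≤ q (t + 1) s a :=
  monotonicity_softmax_general p hp hpsum r γ hγ0 hγ1 η hη d hd θ v hv q hq hupd
end

section
/- Convergence of the value sequence (Corollary 1): for a finite MDP with bounded rewards, under softmax-parametrization policy updates with exact value functions, the sequence of state-action value functions q_t converges pointwise (equivalently uniformly, since S and A are finite) to a limit q_∞ : S × A → ℝ, and the sequence v_t converges pointwise to a limit v_∞ : S → ℝ. -/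
open Finset Filter

lemma le_self_mul_exp (x c : ℝ) (hc : 0 ≤ c) : x ≤ x * Real.exp (c * x) := by
  rcases le_or_gt 0 x with hx | hx
  · nlinarith [Real.one_le_exp (mul_nonneg hc hx)]
  · have h1 : Real.exp (c * x) ≤ 1 := Real.exp_le_one_iff.mpr (by nlinarith)
    nlinarith

lemma key_improve {A : Type*} [Fintype A] [Nonempty A]
    (θ : A → ℝ) (c : ℝ) (hc : 0 ≤ c) (g : A → ℝ) (x : A → ℝ)
    (hx : ∀ a, x a = Real.exp (θ a) / (∑ b, Real.exp (θ b)) * g a)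
    (h0 : ∑ a, x a = 0) :
    0 ≤ ∑ a, (Real.exp (θ a + c * x a) / ∑ b, Real.exp (θ b + c * x b)) * g a := by
  have hZ : (0:ℝ) < ∑ b, Real.exp (θ b) :=
    Finset.sum_pos (fun b _ => Real.exp_pos _) univ_nonempty
  have hD : (0:ℝ) < ∑ b, Real.exp (θ b + c * x b) :=
    Finset.sum_pos (fun b _ => Real.exp_pos _) univ_nonempty
  simp only [div_mul_eq_mul_div]
  rw [← Finset.sum_div]
  apply div_nonneg _ hD.le
  have hnum : ∀ a, Real.exp (θ a + c * x a) * g a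
      = (∑ b, Real.exp (θ b)) * (x a * Real.exp (c * x a)) := by
    intro a
    rw [Real.exp_add, hx a]
    field_simp
  calc (0:ℝ) = (∑ b, Real.exp (θ b)) * ∑ a, x a := by rw [h0, mul_zero]
    _ ≤ (∑ b, Real.exp (θ b)) * ∑ a, x a * Real.exp (c * x a) := by
        apply mul_le_mul_of_nonneg_left _ hZ.le
        exact Finset.sum_le_sum fun a _ => le_self_mul_exp (x a) c hc
    _ = ∑ a, Real.exp (θ a + c * x a) * g a := by
        rw [Finset.mul_sum]; exact Finset.sum_congr rfl fun a _ => (hnum a).symm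

lemma softmaxPol_pos {S A : Type*} [Fintype A] [Nonempty A] (θ : S → A → ℝ) (s : S) (a : A) :
    0 < softmaxPol θ s a :=
  div_pos (Real.exp_pos _) (Finset.sum_pos (fun b _ => Real.exp_pos _) univ_nonempty)

lemma softmaxPol_sum {S A : Type*} [Fintype A] [Nonempty A] (θ : S → A → ℝ) (s : S) :
    ∑ a, softmaxPol θ s a = 1 := by
  unfold softmaxPol
  rw [← Finset.sum_div]
  exact div_self (Finset.sum_pos (fun b _ => Real.exp_pos _) univ_nonempty).ne'

/-- **Convergence of the value sequence** (Corollary 1): for a finite MDP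
(with rewards bounded, automatically, since `S × A` is finite), under
softmax-parametrization policy updates with exact value functions, the
sequences `q_t` and `v_t` converge pointwise to limits `q_∞` and `v_∞`. -/
theorem convergence_softmax
    {S A : Type*} [Fintype S] [Nonempty S] [Fintype A] [Nonempty A]
    (p : S → A → S → ℝ) (hp : ∀ s a s', 0 ≤ p s a s')
    (hpsum : ∀ s a, ∑ s', p s a s' = 1)
    (r : S → A → ℝ) (γ : ℝ) (hγ0 : 0 ≤ γ) (hγ1 : γ < 1)
    (η : ℕ → ℝ) (hη : ∀ t, 0 < η t)
    (d : ℕ → S → ℝ) (hd : ∀ t s, 0 < d t s)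
    (θ : ℕ → S → A → ℝ)
    (v : ℕ → S → ℝ) (hv : ∀ t, IsValueOf p r γ (softmaxPol (θ t)) (v t))
    (q : ℕ → S → A → ℝ)
    (hq : ∀ t s a, q t s a = r s a + γ * ∑ s', p s a s' * v t s')
    (hupd : ∀ t s a, θ (t + 1) s a
      = θ t s a + η t * d t s * softmaxPol (θ t) s a * (q t s a - v t s)) :
    ∃ (qinf : S → A → ℝ) (vinf : S → ℝ),
      (∀ s a, Tendsto (fun t => q t s a) atTop (nhds (qinf s a))) ∧
      (∀ s, Tendsto (fun t => v t s) atTop (nhds (vinf s))) := by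
  -- v expressed via q
  have hvq : ∀ t s, v t s = ∑ a, softmaxPol (θ t) s a * q t s a := by
    intro t s
    rw [hv t s]
    exact Finset.sum_congr rfl fun a _ => by rw [hq]
  -- improvement step: the new policy dominates for old q
  have hstep : ∀ t s, v t s ≤ ∑ a, softmaxPol (θ (t + 1)) s a * q t s a := by
    intro t s
    have h1 : ∑ a, softmaxPol (θ (t + 1)) s a * (q t s a - v t s)
        = (∑ a, softmaxPol (θ (t + 1)) s a * q t s a) - v t s := by
      simp only [mul_sub]
      rw [Finset.sum_sub_distrib, ← Finset.sum_mul, softmaxPol_sum, one_mul]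
    have h2 : 0 ≤ ∑ a, softmaxPol (θ (t + 1)) s a * (q t s a - v t s) := by
      have hθ' : ∀ a, θ (t + 1) s a
          = θ t s a + (η t * d t s) * (softmaxPol (θ t) s a * (q t s a - v t s)) := by
        intro a; rw [hupd]; ring
      have := key_improve (θ t s) (η t * d t s)
        (mul_nonneg (hη t).le (hd t s).le) (fun a => q t s a - v t s)
        (fun a => softmaxPol (θ t) s a * (q t s a - v t s))
        (fun a => rfl)
        (by
          simp only [mul_sub]
          rw [Finset.sum_sub_distrib, ← Finset.sum_mul, softmaxPol_sum, one_mul, ← hvq t s,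
            sub_self])
      calc (0:ℝ) ≤ ∑ a, (Real.exp (θ t s a + (η t * d t s) *
              (softmaxPol (θ t) s a * (q t s a - v t s))) /
              ∑ b, Real.exp (θ t s b + (η t * d t s) *
              (softmaxPol (θ t) s b * (q t s b - v t s)))) * (q t s a - v t s) := this
        _ = ∑ a, softmaxPol (θ (t + 1)) s a * (q t s a - v t s) := by
            apply Finset.sum_congr rfl
            intro a _
            simp only [← hθ']
            rfl
    linarith [h1 ▸ h2]
  -- monotonicity: policy improvement theorem
  have hmono : ∀ t s, v t s ≤ v (t + 1) s := by
    intro t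
    obtain ⟨s0, -, hs0⟩ := Finset.exists_min_image (univ : Finset S)
      (fun s => v (t + 1) s - v t s) univ_nonempty
    suffices h : 0 ≤ v (t + 1) s0 - v t s0 by
      intro s; have := hs0 s (mem_univ s); linarith
    set m := v (t + 1) s0 - v t s0 with hm
    -- Bellman expansion at s0 for v (t+1)
    have hexp : v (t + 1) s0 = (∑ a, softmaxPol (θ (t + 1)) s0 a * q t s0 a)
        + γ * ∑ a, softmaxPol (θ (t + 1)) s0 a *
            ∑ s', p s0 a s' * (v (t + 1) s' - v t s') := by
      rw [hv (t + 1) s0]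
      rw [Finset.mul_sum, ← Finset.sum_add_distrib]
      apply Finset.sum_congr rfl
      intro a _
      rw [hq]
      have : ∑ s', p s0 a s' * (v (t + 1) s' - v t s')
          = (∑ s', p s0 a s' * v (t + 1) s') - ∑ s', p s0 a s' * v t s' := by
        rw [← Finset.sum_sub_distrib]; exact Finset.sum_congr rfl fun s' _ => by ring
      rw [this]; ring
    have hinner : ∀ a, m ≤ ∑ s', p s0 a s' * (v (t + 1) s' - v t s') := by
      intro a
      calc m = ∑ s', p s0 a s' * m := by rw [← Finset.sum_mul, hpsum, one_mul]
        _ ≤ _ := Finset.sum_le_sum fun s' _ =>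
            mul_le_mul_of_nonneg_left (hs0 s' (mem_univ s')) (hp s0 a s')
    have houter : m ≤ ∑ a, softmaxPol (θ (t + 1)) s0 a *
        ∑ s', p s0 a s' * (v (t + 1) s' - v t s') := by
      calc m = ∑ a, softmaxPol (θ (t + 1)) s0 a * m := by
            rw [← Finset.sum_mul, softmaxPol_sum, one_mul]
        _ ≤ _ := Finset.sum_le_sum fun a _ =>
            mul_le_mul_of_nonneg_left (hinner a) (softmaxPol_pos _ _ _).le
    have h1 : v t s0 + γ * m ≤ v (t + 1) s0 := by
      rw [hexp]
      have := hstep t s0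
      nlinarith [mul_le_mul_of_nonneg_left houter hγ0]
    nlinarith [h1]
  have hmono' : ∀ s, Monotone fun t => v t s := fun s =>
    monotone_nat_of_le_succ fun t => hmono t s
  -- uniform upper bound
  obtain ⟨⟨sr, ar⟩, -, hR⟩ := Finset.exists_max_image (univ : Finset (S × A))
    (fun x => r x.1 x.2) univ_nonempty
  set R := r sr ar with hRdef
  have hbd : ∀ t s, v t s ≤ R / (1 - γ) := by
    intro t s
    obtain ⟨s1, -, hs1⟩ := Finset.exists_max_image (univ : Finset S) (v t) univ_nonempty
    set M := v t s1 with hM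
    have hMle : M ≤ R + γ * M := by
      have : M = ∑ a, softmaxPol (θ t) s1 a * (r s1 a + γ * ∑ s', p s1 a s' * v t s') :=
        hv t s1
      have hb : ∀ a, r s1 a + γ * ∑ s', p s1 a s' * v t s' ≤ R + γ * M := by
        intro a
        have h1 : ∑ s', p s1 a s' * v t s' ≤ M := by
          calc ∑ s', p s1 a s' * v t s' ≤ ∑ s', p s1 a s' * M :=
              Finset.sum_le_sum fun s' _ =>
                mul_le_mul_of_nonneg_left (hs1 s' (mem_univ s')) (hp s1 a s')
            _ = M := by rw [← Finset.sum_mul, hpsum, one_mul]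
        have h2 : r s1 a ≤ R := hR (s1, a) (mem_univ _)
        nlinarith
      calc M = ∑ a, softmaxPol (θ t) s1 a * (r s1 a + γ * ∑ s', p s1 a s' * v t s') := this
        _ ≤ ∑ a, softmaxPol (θ t) s1 a * (R + γ * M) :=
            Finset.sum_le_sum fun a _ =>
              mul_le_mul_of_nonneg_left (hb a) (softmaxPol_pos _ _ _).le
        _ = R + γ * M := by rw [← Finset.sum_mul, softmaxPol_sum, one_mul]
    have hMB : M ≤ R / (1 - γ) := by
      rw [le_div_iff₀ (by linarith)]
      nlinarith
    exact le_trans (hs1 s (mem_univ s)) hMB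
  -- convergence of v
  have hconv : ∀ s, Tendsto (fun t => v t s) atTop (nhds (⨆ t, v t s)) := by
    intro s
    exact tendsto_atTop_ciSup (hmono' s) ⟨R / (1 - γ), by rintro _ ⟨t, rfl⟩; exact hbd t s⟩
  refine ⟨fun s a => r s a + γ * ∑ s', p s a s' * (⨆ t, v t s'), fun s => ⨆ t, v t s,
    ?_, hconv⟩
  intro s a
  simp only [hq]
  exact tendsto_const_nhds.add
    ((tendsto_finset_sum _ fun s' _ => (hconv s').const_mul (p s a s')).const_mul γ)
end

section
/- Optimality under the direct parametrization (sufficiency of condition C4, Theorem 2a): for a finite MDP, if Σ_{t=0}^∞ η_t d_t(s) = ∞ for every state s, then under direct-parametrization policy updates with exact value functions, lim_{t→∞} q_t(s,a) = q_⋆(s,a) and lim_{t→∞} v_t(s) = v_⋆(s) for all states s and actions a. -/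
/-!
Projected ascent on the simplex never decreases `∑ a, π(a|s) q(s,a)`, so by the policy improvement
theorem the values `v_t` increase to a limit `L` and the one-step gains
`∑ a, (π_{t+1} - π_t)(a|s) q_t(s,a)` are summable. The projection also bounds
`‖π_{t+1} - π_t‖²` by `η_t d_t(s)` times the gain, so when `∑ η_t d_t(s)` diverges the step
`‖π_{t+1} - π_t‖₁` is `o(η_t d_t(s))` along a subsequence, and along it the variational inequality
of the projection makes `π_{t+1}` nearly greedy for `q_t`. In the limit `r + γ P L ≤ L`, so `L`
dominates the value of every policy: `L = v⋆` and `q_t → r + γ P L = q⋆`.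
-/

open Finset Filter

open Topology

section SimplexProjection

variable {A : Type*} [Fintype A]

theorem sum_mul_sub_nonneg_of_isMinOn {K : Set (A → ℝ)} (hK : Convex ℝ K) {y z w : A → ℝ}
    (hz : z ∈ K) (hmin : IsMinOn (fun u => ∑ a, (u a - y a) ^ 2) K z) (hw : w ∈ K) :
    0 ≤ ∑ a, (z a - y a) * (w a - z a) := by
  set I := ∑ a, (z a - y a) * (w a - z a)
  set B := ∑ a, (w a - z a) ^ 2
  have hsegment : ∀ l ∈ Set.Ioc (0 : ℝ) 1, 0 ≤ 2 * I + l * B := by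
    intro l hl
    have hmem := hK.add_smul_sub_mem hz hw (Set.Ioc_subset_Icc_self hl)
    have hexpand : ∀ a, ((z + l • (w - z)) a - y a) ^ 2
        = (z a - y a) ^ 2 + l * (2 * ((z a - y a) * (w a - z a)) + l * (w a - z a) ^ 2) := by
      intro a; simp only [Pi.add_apply, Pi.smul_apply, Pi.sub_apply, smul_eq_mul]; ring
    have h := isMinOn_iff.mp hmin _ hmem
    simp only [hexpand, sum_add_distrib, ← mul_sum] at h
    exact nonneg_of_mul_nonneg_right (by linarith) hl.1
  have hlim : Tendsto (fun l => 2 * I + l * B) (𝓝[>] 0) (𝓝 (2 * I + 0 * B)) :=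
    ((continuous_const.add (continuous_id.mul continuous_const)).tendsto 0).mono_left
      nhdsWithin_le_nhds
  have := ge_of_tendsto hlim (Filter.mem_of_superset (Ioc_mem_nhdsGT one_pos) hsegment)
  linarith

theorem sum_sq_sub_le_mul_sum_mul_sub_of_isMinOn {K : Set (A → ℝ)} (hK : Convex ℝ K)
    {x z g : A → ℝ} {c : ℝ} (hx : x ∈ K) (hz : z ∈ K)
    (hmin : IsMinOn (fun u => ∑ a, (u a - (x a + c * g a)) ^ 2) K z) :
    ∑ a, (z a - x a) ^ 2 ≤ c * (∑ a, z a * g a - ∑ a, x a * g a) := by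
  have h := sum_mul_sub_nonneg_of_isMinOn hK hz hmin hx
  have hsplit : ∑ a, (z a - (x a + c * g a)) * (x a - z a)
      = c * (∑ a, z a * g a - ∑ a, x a * g a) - ∑ a, (z a - x a) ^ 2 := by
    rw [mul_sub, mul_sum, mul_sum, ← sum_sub_distrib, ← sum_sub_distrib]
    exact sum_congr rfl fun a _ => by ring
  linarith

theorem sum_mul_le_sum_mul_of_isMinOn {K : Set (A → ℝ)} (hK : Convex ℝ K)
    {x z g : A → ℝ} {c : ℝ} (hc : 0 < c) (hx : x ∈ K) (hz : z ∈ K)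
    (hmin : IsMinOn (fun u => ∑ a, (u a - (x a + c * g a)) ^ 2) K z) :
    ∑ a, x a * g a ≤ ∑ a, z a * g a := by
  have h := sum_sq_sub_le_mul_sum_mul_sub_of_isMinOn hK hx hz hmin
  have hsq : 0 ≤ ∑ a, (z a - x a) ^ 2 := sum_nonneg fun a _ => sq_nonneg _
  nlinarith

theorem mul_sub_sum_mul_le_sum_abs_of_isMinOn [DecidableEq A] {x z g : A → ℝ} {c : ℝ}
    (hz : z ∈ stdSimplex ℝ A)
    (hmin : IsMinOn (fun u => ∑ a, (u a - (x a + c * g a)) ^ 2) (stdSimplex ℝ A) z) (a₀ : A) :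
    c * (g a₀ - ∑ a, z a * g a) ≤ ∑ a, |z a - x a| := by
  set δ : A → ℝ := Pi.single a₀ 1
  have hδ : δ ∈ stdSimplex ℝ A := single_mem_stdSimplex ℝ a₀
  have h := sum_mul_sub_nonneg_of_isMinOn (convex_stdSimplex ℝ A) hz hmin hδ
  have hsplit : ∑ a, (z a - (x a + c * g a)) * (δ a - z a)
      = ∑ a, (z a - x a) * (δ a - z a) - c * (g a₀ - ∑ a, z a * g a) := by
    have hg : g a₀ = ∑ a, g a * δ a := by simp [δ, Pi.single_apply]
    rw [hg, ← sum_sub_distrib, mul_sum, ← sum_sub_distrib]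
    exact sum_congr rfl fun a _ => by ring
  have hbound : ∀ a, (z a - x a) * (δ a - z a) ≤ |z a - x a| := by
    intro a
    have hdist : |δ a - z a| ≤ 1 := by
      have hδa := mem_Icc_of_mem_stdSimplex hδ a
      have hza := mem_Icc_of_mem_stdSimplex hz a
      rw [abs_sub_le_iff]; constructor <;> linarith [hδa.1, hδa.2, hza.1, hza.2]
    calc (z a - x a) * (δ a - z a) ≤ |z a - x a| * |δ a - z a| := by
          rw [← abs_mul]; exact le_abs_self _
      _ ≤ |z a - x a| := mul_le_of_le_one_right (abs_nonneg _) hdist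
  linarith [sum_le_sum fun a (_ : a ∈ univ) => hbound a]

end SimplexProjection

theorem IsGreatest.eq_of_tendsto {α β : Type*} [LinearOrder α] [TopologicalSpace α]
    [OrderClosedTopology α] {X : Set α} {m L : α} {l : Filter β} [l.NeBot] {f : β → α}
    (hm : IsGreatest X m) (hf : Tendsto f l (𝓝 L)) (hfX : ∀ b, f b ∈ X) (hL : L ∈ upperBounds X) :
    L = m :=
  le_antisymm (le_of_tendsto' hf fun b => hm.2 (hfX b)) (hL hm.1)

theorem frequently_le_mul_of_sq_le_mul {c G D : ℕ → ℝ} {K ε : ℝ} (hc : ∀ t, 0 < c t)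
    (hc_sum : Tendsto (fun T => ∑ t ∈ range T, c t) atTop atTop) (hG : Summable G)
    (hD : ∀ t, D t ^ 2 ≤ K * c t * G t) (hε : 0 < ε) :
    ∃ᶠ t in atTop, D t ≤ ε * c t := by
  -- Otherwise `c t ≤ K / ε ^ 2 * G t` eventually, and `∑ c t` would converge.
  by_contra h
  have hbound : ∀ᶠ t in atTop, ‖c t‖ ≤ K / ε ^ 2 * G t := (not_frequently.mp h).mono fun t ht => by
    rw [not_le] at ht
    have hsq : (ε * c t) ^ 2 < D t ^ 2 := pow_lt_pow_left₀ ht (by nlinarith [hc t]) two_ne_zero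
    rw [Real.norm_of_nonneg (hc t).le, div_mul_eq_mul_div, le_div_iff₀ (by positivity)]
    nlinarith [hD t, hc t]
  exact not_tendsto_atTop_of_tendsto_nhds
    ((hG.mul_left _).of_norm_bounded_eventually_nat hbound).tendsto_sum_tsum_nat hc_sum

theorem summable_of_nonneg_of_le_succ_sub {G f : ℕ → ℝ} {B : ℝ} (hG : ∀ t, 0 ≤ G t)
    (hGf : ∀ t, G t ≤ f (t + 1) - f t) (hf : ∀ t, f t ≤ B) : Summable G :=
  summable_of_sum_range_le hG fun T =>
    calc ∑ t ∈ range T, G t ≤ ∑ t ∈ range T, (f (t + 1) - f t) := sum_le_sum fun t _ => hGf t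
      _ = f T - f 0 := sum_range_sub f T
      _ ≤ B - f 0 := by linarith [hf T]

theorem frequently_le_sum_mul_add_of_projected_ascent {A : Type*} [Fintype A] [DecidableEq A]
    {x g : ℕ → A → ℝ} {c : ℕ → ℝ} (hx : ∀ t, x t ∈ stdSimplex ℝ A) (hc : ∀ t, 0 < c t)
    (hc_sum : Tendsto (fun T => ∑ t ∈ range T, c t) atTop atTop)
    (hproj : ∀ t, IsMinOn (fun u => ∑ a, (u a - (x t a + c t * g t a)) ^ 2) (stdSimplex ℝ A)
      (x (t + 1)))
    (hgain : Summable fun t => ∑ a, x (t + 1) a * g t a - ∑ a, x t a * g t a)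
    (a₀ : A) {ε : ℝ} (hε : 0 < ε) :
    ∃ᶠ t in atTop, g t a₀ ≤ ∑ a, x (t + 1) a * g t a + ε := by
  have hstep : ∀ t, (∑ a, |x (t + 1) a - x t a|) ^ 2
      ≤ Fintype.card A * c t * (∑ a, x (t + 1) a * g t a - ∑ a, x t a * g t a) := fun t =>
    calc (∑ a, |x (t + 1) a - x t a|) ^ 2 ≤ Fintype.card A * ∑ a, (x (t + 1) a - x t a) ^ 2 := by
          simpa only [sq_abs, card_univ] using
            sq_sum_le_card_mul_sum_sq (s := univ) (f := fun a => |x (t + 1) a - x t a|)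
      _ ≤ _ := by
          rw [mul_assoc]
          gcongr
          exact sum_sq_sub_le_mul_sum_mul_sub_of_isMinOn (convex_stdSimplex ℝ A) (hx t) (hx (t + 1))
            (hproj t)
  refine (frequently_le_mul_of_sq_le_mul hc hc_sum hgain hstep hε).mono fun t ht => ?_
  have hgap := (mul_sub_sum_mul_le_sum_abs_of_isMinOn (hx (t + 1)) (hproj t) a₀).trans ht
  rw [mul_comm ε] at hgap
  linarith [le_of_mul_le_mul_left hgap (hc t)]

section MDP

variable {S A : Type*}

def bellmanQ [Fintype S] (p : S → A → S → ℝ) (r : S → A → ℝ) (γ : ℝ) (w : S → ℝ) (s : S)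
    (a : A) : ℝ :=
  r s a + γ * ∑ s', p s a s' * w s'

/-- The policy-evaluation operator `T_π`; `IsValueOf p r γ π w` unfolds to
`∀ s, w s = bellmanEval p r γ π w s`. -/
def bellmanEval [Fintype S] [Fintype A] (p : S → A → S → ℝ) (r : S → A → ℝ) (γ : ℝ)
    (π : S → A → ℝ) (w : S → ℝ) (s : S) : ℝ :=
  ∑ a, π s a * bellmanQ p r γ w s a

theorem IsPolicy.mem_stdSimplex [Fintype A] {π : S → A → ℝ} (hπ : IsPolicy π) (s : S) :
    π s ∈ stdSimplex ℝ A :=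
  ⟨hπ.1 s, hπ.2 s⟩

theorem bellmanQ_mono [Fintype S] {p : S → A → S → ℝ} (hp : ∀ s a s', 0 ≤ p s a s')
    (r : S → A → ℝ) {γ : ℝ} (hγ0 : 0 ≤ γ) {u w : S → ℝ} (huw : ∀ s, u s ≤ w s) (s : S) (a : A) :
    bellmanQ p r γ u s a ≤ bellmanQ p r γ w s a := by
  unfold bellmanQ
  gcongr with s'
  · exact hp s a s'
  · exact huw s'

theorem tendsto_bellmanQ [Fintype S] {ι : Type*} {l : Filter ι} (p : S → A → S → ℝ)
    (r : S → A → ℝ) (γ : ℝ) {w : ι → S → ℝ} {L : S → ℝ}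
    (hw : ∀ s, Tendsto (fun i => w i s) l (𝓝 (L s))) (s : S) (a : A) :
    Tendsto (fun i => bellmanQ p r γ (w i) s a) l (𝓝 (bellmanQ p r γ L s a)) :=
  tendsto_const_nhds.add <| tendsto_const_nhds.mul <|
    tendsto_finsetSum _ fun s' _ => tendsto_const_nhds.mul (hw s')

theorem nonneg_of_le_discounted_average [Fintype S] {P : S → S → ℝ} (hP : ∀ s s', 0 ≤ P s s')
    (hP1 : ∀ s, ∑ s', P s s' = 1) {γ : ℝ} (hγ0 : 0 ≤ γ) (hγ1 : γ < 1) {u : S → ℝ}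
    (hu : ∀ s, γ * ∑ s', P s s' * u s' ≤ u s) (s : S) : 0 ≤ u s := by
  obtain ⟨s₀, -, hmin⟩ := exists_min_image univ u ⟨s, mem_univ s⟩
  have hs₀ : γ * u s₀ ≤ u s₀ :=
    calc γ * u s₀ = γ * ∑ s', P s₀ s' * u s₀ := by rw [← sum_mul, hP1, one_mul]
      _ ≤ γ * ∑ s', P s₀ s' * u s' := by
          gcongr with s'
          · exact hP s₀ s'
          · exact hmin s' (mem_univ s')
      _ ≤ u s₀ := hu s₀
  exact (by nlinarith : 0 ≤ u s₀).trans (hmin s (mem_univ s))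

theorem bellmanEval_sub_bellmanEval [Fintype S] [Fintype A] (p : S → A → S → ℝ)
    (r : S → A → ℝ) (γ : ℝ) (π : S → A → ℝ) (u w : S → ℝ) (s : S) :
    bellmanEval p r γ π u s - bellmanEval p r γ π w s
      = γ * ∑ s', (∑ a, π s a * p s a s') * (u s' - w s') :=
  calc bellmanEval p r γ π u s - bellmanEval p r γ π w s
      = ∑ a, π s a * (γ * ∑ s', p s a s' * (u s' - w s')) := by
        rw [bellmanEval, bellmanEval, ← sum_sub_distrib]
        refine sum_congr rfl fun a _ => ?_
        simp only [bellmanQ, mul_sub, sum_sub_distrib]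
        ring
    _ = γ * ∑ s', (∑ a, π s a * p s a s') * (u s' - w s') := by
        simp only [mul_sum, sum_mul]
        rw [sum_comm]
        exact sum_congr rfl fun _ _ => sum_congr rfl fun _ _ => by ring

theorem le_of_bellmanEval_sub_le [Fintype S] [Fintype A] {p : S → A → S → ℝ}
    (hp : ∀ s a s', 0 ≤ p s a s') (hpsum : ∀ s a, ∑ s', p s a s' = 1) (r : S → A → ℝ) {γ : ℝ}
    (hγ0 : 0 ≤ γ) (hγ1 : γ < 1) {π : S → A → ℝ} (hπ : IsPolicy π) {u w : S → ℝ}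
    (h : ∀ s, bellmanEval p r γ π u s - u s ≤ bellmanEval p r γ π w s - w s) (s : S) :
    w s ≤ u s := by
  have hP1 : ∀ s, ∑ s', ∑ a, π s a * p s a s' = 1 := fun s => by
    rw [sum_comm]
    simp only [← mul_sum, hpsum, mul_one]
    exact hπ.2 s
  have := nonneg_of_le_discounted_average
    (fun s s' => sum_nonneg fun a _ => mul_nonneg (hπ.1 s a) (hp s a s')) hP1 hγ0 hγ1
    (u := fun s => u s - w s)
    (fun s => by linarith [bellmanEval_sub_bellmanEval p r γ π u w s, h s]) s
  linarith

theorem IsValueOf.bellmanEval_le_of_le_bellmanEval [Fintype S] [Fintype A]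
    {p : S → A → S → ℝ} (hp : ∀ s a s', 0 ≤ p s a s') (hpsum : ∀ s a, ∑ s', p s a s' = 1)
    {r : S → A → ℝ} {γ : ℝ} (hγ0 : 0 ≤ γ) (hγ1 : γ < 1) {π : S → A → ℝ} (hπ : IsPolicy π)
    {w : S → ℝ} (hw : IsValueOf p r γ π w) {u : S → ℝ}
    (hu : ∀ s, u s ≤ bellmanEval p r γ π u s) (s : S) :
    bellmanEval p r γ π u s ≤ w s := by
  have huw : ∀ s, u s ≤ w s :=
    le_of_bellmanEval_sub_le hp hpsum r hγ0 hγ1 hπ fun s => by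
      linarith [hu s, show bellmanEval p r γ π w s = w s from (hw s).symm]
  calc bellmanEval p r γ π u s ≤ bellmanEval p r γ π w s :=
        sum_le_sum fun a _ => mul_le_mul_of_nonneg_left (bellmanQ_mono hp r hγ0 huw s a) (hπ.1 s a)
    _ = w s := (hw s).symm

theorem IsValueOf.le_of_bellmanQ_le [Fintype S] [Fintype A]
    {p : S → A → S → ℝ} (hp : ∀ s a s', 0 ≤ p s a s') (hpsum : ∀ s a, ∑ s', p s a s' = 1)
    {r : S → A → ℝ} {γ : ℝ} (hγ0 : 0 ≤ γ) (hγ1 : γ < 1) {π : S → A → ℝ} (hπ : IsPolicy π)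
    {w : S → ℝ} (hw : IsValueOf p r γ π w) {L : S → ℝ}
    (hL : ∀ s a, bellmanQ p r γ L s a ≤ L s) (s : S) : w s ≤ L s := by
  refine le_of_bellmanEval_sub_le hp hpsum r hγ0 hγ1 hπ (fun s => ?_) s
  have hLs : bellmanEval p r γ π L s ≤ L s :=
    calc bellmanEval p r γ π L s ≤ ∑ a, π s a * L s :=
          sum_le_sum fun a _ => mul_le_mul_of_nonneg_left (hL s a) (hπ.1 s a)
      _ = L s := by rw [← sum_mul, hπ.2 s, one_mul]
  linarith [show bellmanEval p r γ π w s = w s from (hw s).symm]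

theorem exists_tendsto_value_bellmanQ_le [Fintype S] [Fintype A] {p : S → A → S → ℝ}
    (hp : ∀ s a s', 0 ≤ p s a s') (hpsum : ∀ s a, ∑ s', p s a s' = 1) {r : S → A → ℝ} {γ : ℝ}
    (hγ0 : 0 ≤ γ) (hγ1 : γ < 1) {π : ℕ → S → A → ℝ} (hπ : ∀ t, IsPolicy (π t))
    {v : ℕ → S → ℝ} (hv : ∀ t, IsValueOf p r γ (π t) (v t))
    (hbdd : ∀ s, BddAbove (Set.range fun t => v t s)) {c : ℕ → S → ℝ} (hc : ∀ t s, 0 < c t s)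
    (hc_sum : ∀ s, Tendsto (fun T => ∑ t ∈ range T, c t s) atTop atTop)
    (hproj : ∀ t s, IsMinOn (fun u => ∑ a, (u a - (π t s a + c t s * bellmanQ p r γ (v t) s a)) ^ 2)
      (stdSimplex ℝ A) (π (t + 1) s)) :
    ∃ L : S → ℝ, (∀ s, Tendsto (fun t => v t s) atTop (𝓝 (L s))) ∧
      ∀ s a, bellmanQ p r γ L s a ≤ L s := by
  classical
  have hascent : ∀ t s, v t s ≤ bellmanEval p r γ (π (t + 1)) (v t) s := fun t s =>
    (hv t s).trans_le <| sum_mul_le_sum_mul_of_isMinOn (convex_stdSimplex ℝ A) (hc t s)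
      ((hπ t).mem_stdSimplex s) ((hπ (t + 1)).mem_stdSimplex s) (hproj t s)
  have himprove : ∀ t s, bellmanEval p r γ (π (t + 1)) (v t) s ≤ v (t + 1) s := fun t =>
    (hv (t + 1)).bellmanEval_le_of_le_bellmanEval hp hpsum hγ0 hγ1 (hπ (t + 1)) (hascent t)
  have hmono : ∀ s, Monotone fun t => v t s := fun s =>
    monotone_nat_of_le_succ fun t => (hascent t s).trans (himprove t s)
  have hlim : ∀ s, Tendsto (fun t => v t s) atTop (𝓝 (⨆ t, v t s)) := fun s =>
    tendsto_atTop_ciSup (hmono s) (hbdd s)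
  refine ⟨fun s => ⨆ t, v t s, hlim, fun s a => ?_⟩
  obtain ⟨B, hB⟩ := hbdd s
  have hgain : Summable fun t => bellmanEval p r γ (π (t + 1)) (v t) s - v t s :=
    summable_of_nonneg_of_le_succ_sub (fun t => sub_nonneg.2 (hascent t s))
      (fun t => by linarith [himprove t s]) (fun t => hB ⟨t, rfl⟩)
  refine le_of_forall_pos_le_add fun ε hε =>
    le_of_tendsto_of_frequently (tendsto_bellmanQ p r γ hlim s a) ?_
  refine (frequently_le_sum_mul_add_of_projected_ascent (fun t => (hπ t).mem_stdSimplex s)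
    (fun t => hc t s) (hc_sum s) (fun t => hproj t s) (hgain.congr fun t => ?_) a hε).mono
    fun t ht => ht.trans (add_le_add_left ((himprove t s).trans (le_ciSup (hbdd s) (t + 1))) ε)
  rw [hv t s]
  rfl

end MDP

theorem optimality_direct_general
    {S A : Type*} [Fintype S] [Fintype A]
    (p : S → A → S → ℝ) (hp : ∀ s a s', 0 ≤ p s a s')
    (hpsum : ∀ s a, ∑ s', p s a s' = 1)
    (r : S → A → ℝ) (γ : ℝ) (hγ0 : 0 ≤ γ) (hγ1 : γ < 1)
    (η : ℕ → ℝ) (hη : ∀ t, 0 < η t)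
    (d : ℕ → S → ℝ) (hd : ∀ t s, 0 < d t s)
    (π : ℕ → S → A → ℝ) (hπ : ∀ t, IsPolicy (π t))
    (v : ℕ → S → ℝ) (hv : ∀ t, IsValueOf p r γ (π t) (v t))
    (q : ℕ → S → A → ℝ)
    (hq : ∀ t s a, q t s a = r s a + γ * ∑ s', p s a s' * v t s')
    -- `π (t+1) (·|s)` is the Euclidean projection of
    -- `π t (·|s) + η t * d t s * q t (s, ·)` onto the simplex:
    (hproj : ∀ t s, ∀ w : A → ℝ, (∀ a, 0 ≤ w a) → ∑ a, w a = 1 →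
        ∑ a, (π (t + 1) s a - (π t s a + η t * d t s * q t s a)) ^ 2
          ≤ ∑ a, (w a - (π t s a + η t * d t s * q t s a)) ^ 2)
    -- condition C4:
    (hC4 : ∀ s, Tendsto (fun T => ∑ t ∈ Finset.range T, η t * d t s) atTop atTop)
    -- optimal values `v⋆(s) = max_π v_π(s)` and `q⋆(s,a) = max_π q_π(s,a)`:
    (vstar : S → ℝ)
    (hvstar : ∀ s, IsGreatest {x : ℝ | ∃ (π' : S → A → ℝ) (w : S → ℝ),
        IsPolicy π' ∧ IsValueOf p r γ π' w ∧ w s = x} (vstar s))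
    (qstar : S → A → ℝ)
    (hqstar : ∀ s a, IsGreatest {x : ℝ | ∃ (π' : S → A → ℝ) (w : S → ℝ),
        IsPolicy π' ∧ IsValueOf p r γ π' w ∧
        r s a + γ * ∑ s', p s a s' * w s' = x} (qstar s a)) :
    (∀ s a, Tendsto (fun t => q t s a) atTop (nhds (qstar s a))) ∧
    (∀ s, Tendsto (fun t => v t s) atTop (nhds (vstar s))) := by
  obtain rfl : q = fun t => bellmanQ p r γ (v t) := funext fun t => funext₂ (hq t)
  obtain ⟨L, hvL, hL⟩ := exists_tendsto_value_bellmanQ_le hp hpsum hγ0 hγ1 hπ hv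
    (fun s => ⟨vstar s, Set.forall_mem_range.2 fun t => (hvstar s).2 ⟨π t, v t, hπ t, hv t, rfl⟩⟩)
    (fun t s => mul_pos (hη t) (hd t s)) hC4
    (fun t s => isMinOn_iff.2 fun w hw => hproj t s w hw.1 hw.2)
  have hL_ge : ∀ π' w, IsPolicy π' → IsValueOf p r γ π' w → ∀ s, w s ≤ L s :=
    fun π' w hπ' hw => hw.le_of_bellmanQ_le hp hpsum hγ0 hγ1 hπ' hL
  have hLv : ∀ s, L s = vstar s := fun s =>
    (hvstar s).eq_of_tendsto (hvL s) (fun t => ⟨π t, v t, hπ t, hv t, rfl⟩) <| by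
      rintro _ ⟨π', w, hπ', hw, rfl⟩
      exact hL_ge π' w hπ' hw s
  have hLq : ∀ s a, bellmanQ p r γ L s a = qstar s a := fun s a =>
    (hqstar s a).eq_of_tendsto (tendsto_bellmanQ p r γ hvL s a)
      (fun t => ⟨π t, v t, hπ t, hv t, rfl⟩) <| by
        rintro _ ⟨π', w, hπ', hw, rfl⟩
        exact bellmanQ_mono hp r hγ0 (hL_ge π' w hπ' hw) s a
  exact ⟨fun s a => hLq s a ▸ tendsto_bellmanQ p r γ hvL s a, fun s => hLv s ▸ hvL s⟩

/-- **Optimality under the direct parametrization** (Theorem 2a): if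
`Σ_t η_t d_t(s) = ∞` in every state `s` (condition C4), then under
direct-parametrization policy updates with exact value functions,
`q_t → q⋆` and `v_t → v⋆`. -/
theorem optimality_direct
    {S A : Type*} [Fintype S] [Nonempty S] [Fintype A] [Nonempty A]
    (p : S → A → S → ℝ) (hp : ∀ s a s', 0 ≤ p s a s')
    (hpsum : ∀ s a, ∑ s', p s a s' = 1)
    (r : S → A → ℝ) (γ : ℝ) (hγ0 : 0 ≤ γ) (hγ1 : γ < 1)
    (η : ℕ → ℝ) (hη : ∀ t, 0 < η t)
    (d : ℕ → S → ℝ) (hd : ∀ t s, 0 < d t s)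
    (π : ℕ → S → A → ℝ) (hπ : ∀ t, IsPolicy (π t))
    (v : ℕ → S → ℝ) (hv : ∀ t, IsValueOf p r γ (π t) (v t))
    (q : ℕ → S → A → ℝ)
    (hq : ∀ t s a, q t s a = r s a + γ * ∑ s', p s a s' * v t s')
    -- `π (t+1) (·|s)` is the Euclidean projection of
    -- `π t (·|s) + η t * d t s * q t (s, ·)` onto the simplex:
    (hproj : ∀ t s, ∀ w : A → ℝ, (∀ a, 0 ≤ w a) → ∑ a, w a = 1 →
        ∑ a, (π (t + 1) s a - (π t s a + η t * d t s * q t s a)) ^ 2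
          ≤ ∑ a, (w a - (π t s a + η t * d t s * q t s a)) ^ 2)
    -- condition C4:
    (hC4 : ∀ s, Tendsto (fun T => ∑ t ∈ Finset.range T, η t * d t s) atTop atTop)
    -- optimal values `v⋆(s) = max_π v_π(s)` and `q⋆(s,a) = max_π q_π(s,a)`:
    (vstar : S → ℝ)
    (hvstar : ∀ s, IsGreatest {x : ℝ | ∃ (π' : S → A → ℝ) (w : S → ℝ),
        IsPolicy π' ∧ IsValueOf p r γ π' w ∧ w s = x} (vstar s))
    (qstar : S → A → ℝ)
    (hqstar : ∀ s a, IsGreatest {x : ℝ | ∃ (π' : S → A → ℝ) (w : S → ℝ),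
        IsPolicy π' ∧ IsValueOf p r γ π' w ∧
        r s a + γ * ∑ s', p s a s' * w s' = x} (qstar s a)) :
    (∀ s a, Tendsto (fun t => q t s a) atTop (nhds (qstar s a))) ∧
    (∀ s, Tendsto (fun t => v t s) atTop (nhds (vstar s))) :=
  optimality_direct_general p hp hpsum r γ hγ0 hγ1 η hη d hd π hπ v hv q hq hproj hC4 vstar hvstar
    qstar hqstar
end

section
/- Necessity of condition C4, direct parametrization (Theorem 2c, counterexample): suppose m ≔ Σ_{t=0}^∞ η_t d_t < ∞ and p_0 < 1, and choose r_2 = 1 − (1 − p_0)/m (assumed to lie in [0,1)). Then for all t, p_t ≤ (1 + p_0)/2, and hence 1 − v(p_t) ≥ (1 − r_2)(1 − p_0)/2 > 0; in particular the values v(p_t) stay bounded away from the optimal value 1. -/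
open Finset Filter

/-!
Since `p_{t+1} ≤ p_t + η_t d_t (1 - r₂)/2`, the iterates never exceed `p₀` plus the
total step budget `m (1 - r₂)/2`, and the choice of `r₂` makes `m (1 - r₂) = 1 - p₀`.
So `p_t ≤ (1 + p₀)/2`, and the gap `1 - v(p_t) = (1 - p_t)(1 - r₂)` stays at least
`(1 - p₀)(1 - r₂)/2`.
-/

theorem le_add_sum_range_of_le_add {α : Type*} [AddCommGroup α] [PartialOrder α]
    [IsOrderedAddMonoid α] {x a : ℕ → α} (h : ∀ t, x (t + 1) ≤ x t + a t) (t : ℕ) :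
    x t ≤ x 0 + ∑ i ∈ range t, a i := by
  have hinc : ∑ i ∈ range t, (x (i + 1) - x i) ≤ ∑ i ∈ range t, a i :=
    sum_le_sum fun i _ => sub_le_iff_le_add'.mpr (h i)
  rw [sum_range_sub] at hinc
  exact sub_le_iff_le_add'.mp hinc

theorem le_add_hasSum_of_eq_min_one_add {s p : ℕ → ℝ} {m r : ℝ} (hs : ∀ t, 0 ≤ s t)
    (hm : HasSum s m) (hr : r ≤ 1) (hupd : ∀ t, p (t + 1) = min 1 (p t + s t * (1 - r) / 2))
    (t : ℕ) : p t ≤ p 0 + m * (1 - r) / 2 := by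
  have hstep (t : ℕ) : p (t + 1) ≤ p t + s t * (1 - r) / 2 := hupd t ▸ min_le_right _ _
  calc p t ≤ p 0 + ∑ i ∈ range t, s i * (1 - r) / 2 := le_add_sum_range_of_le_add hstep t
    _ = p 0 + (∑ i ∈ range t, s i) * (1 - r) / 2 := by rw [← sum_div, ← sum_mul]
    _ ≤ p 0 + m * (1 - r) / 2 := by
      gcongr
      exact sum_le_hasSum _ (fun i _ => hs i) hm

theorem mul_one_sub_eq_of_eq_one_sub_div {m r a : ℝ} (hr : r = 1 - a / m) (hr1 : r < 1) :
    m * (1 - r) = a := by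
  have hm : m ≠ 0 := by
    rintro rfl
    simp at hr
    linarith
  rw [hr]
  field_simp
  ring

theorem necessity_direct_general
    (η : ℕ → ℝ) (hη : ∀ t, 0 < η t)
    (d : ℕ → ℝ) (hd : ∀ t, 0 < d t)
    (m : ℝ) (hm : HasSum (fun t => η t * d t) m)
    (p : ℕ → ℝ) (hp0 : p 0 < 1)
    (r2 : ℝ) (hr2 : r2 = 1 - (1 - p 0) / m)
    (hr2mem : 0 ≤ r2 ∧ r2 < 1)
    (hupd : ∀ t, p (t + 1) = min 1 (p t + η t * d t * (1 - r2) / 2)) :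
    ∀ t, p t ≤ (1 + p 0) / 2 ∧
      (1 - r2) * (1 - p 0) / 2 ≤ 1 - (p t + (1 - p t) * r2) ∧
      0 < (1 - r2) * (1 - p 0) / 2 := by
  intro t
  have hbudget : m * (1 - r2) = 1 - p 0 := mul_one_sub_eq_of_eq_one_sub_div hr2 hr2mem.2
  have hpt : p t ≤ (1 + p 0) / 2 := by
    have := le_add_hasSum_of_eq_min_one_add (fun t => (mul_pos (hη t) (hd t)).le) hm hr2mem.2.le hupd t
    linarith
  have hgap : 1 - (p t + (1 - p t) * r2) = (1 - r2) * (1 - p t) := by ring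
  have hr2' : 0 < 1 - r2 := sub_pos.mpr hr2mem.2
  refine ⟨hpt, ?_, by have := sub_pos.mpr hp0; positivity⟩
  rw [hgap, mul_div_assoc]
  exact mul_le_mul_of_nonneg_left (by linarith) hr2'.le

/-- **Necessity of condition C4, direct parametrization** (Theorem 2c,
counterexample). Two-armed bandit with rewards `q(a₁) = 1` and `q(a₂) = r₂`;
a policy is the probability `p_t` of playing `a₁`, with value
`v(p) = p + (1 - p) r₂`. If `m = Σ_t η_t d_t < ∞`, `p₀ < 1`, and
`r₂ = 1 - (1 - p₀)/m ∈ [0, 1)`, then the direct-parametrization updates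
`p_{t+1} = min(1, p_t + η_t d_t (1 - r₂)/2)` satisfy `p_t ≤ (1 + p₀)/2`
for all `t`, hence `1 - v(p_t) ≥ (1 - r₂)(1 - p₀)/2 > 0`: the values stay
bounded away from the optimal value `1`. -/
theorem necessity_direct
    (η : ℕ → ℝ) (hη : ∀ t, 0 < η t)
    (d : ℕ → ℝ) (hd : ∀ t, 0 < d t)
    (m : ℝ) (hm : HasSum (fun t => η t * d t) m)
    (p : ℕ → ℝ) (hp0mem : 0 ≤ p 0) (hp0 : p 0 < 1)
    (r2 : ℝ) (hr2 : r2 = 1 - (1 - p 0) / m)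
    (hr2mem : 0 ≤ r2 ∧ r2 < 1)
    (hupd : ∀ t, p (t + 1) = min 1 (p t + η t * d t * (1 - r2) / 2)) :
    ∀ t, p t ≤ (1 + p 0) / 2 ∧
      (1 - r2) * (1 - p 0) / 2 ≤ 1 - (p t + (1 - p t) * r2) ∧
      0 < (1 - r2) * (1 - p 0) / 2 :=
  necessity_direct_general η hη d hd m hm p hp0 r2 hr2 hr2mem hupd
end

section
/- Necessity of condition C4, softmax parametrization (Theorem 2c, counterexample): if m ≔ Σ_{t=0}^∞ η_t d_t < ∞, then for every r_2 ∈ [0,1) and every t, 1 − v(θ_t) ≥ (1 − r_2)/2 · min(1, exp(θ_0(a_2) − θ_0(a_1) − m/2)) > 0; in particular the values v(θ_t) stay bounded away from the optimal value 1. -/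
open Finset Filter

/-- **Necessity of condition C4, softmax parametrization** (Theorem 2c,
counterexample). Two-armed bandit with rewards `q(a₁) = 1` and `q(a₂) = r₂`;
`θ t i` is the softmax parameter of arm `i` (`i = 0` for `a₁`, `i = 1` for
`a₂`), the policy is `π_t(a_i) = exp(θ t i) / (exp(θ t 0) + exp(θ t 1))`, and
the value is `v_t = π_t(a₁) + π_t(a₂) r₂`. If `m = Σ_t η_t d_t < ∞`, then for
every `r₂ ∈ [0, 1)` and every `t`,
`1 - v_t ≥ (1 - r₂)/2 · min(1, exp(θ₀(a₂) - θ₀(a₁) - m/2)) > 0`: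
the values stay bounded away from the optimal value `1`. -/
theorem necessity_softmax
    (η : ℕ → ℝ) (hη : ∀ t, 0 < η t)
    (d : ℕ → ℝ) (hd : ∀ t, 0 < d t)
    (m : ℝ) (hm : HasSum (fun t => η t * d t) m)
    (r2 : ℝ) (hr2 : 0 ≤ r2 ∧ r2 < 1)
    (θ : ℕ → Fin 2 → ℝ)
    (π : ℕ → Fin 2 → ℝ)
    (hπ : ∀ t i, π t i = Real.exp (θ t i) / (Real.exp (θ t 0) + Real.exp (θ t 1)))
    (v : ℕ → ℝ) (hv : ∀ t, v t = π t 0 * 1 + π t 1 * r2)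
    (hupd0 : ∀ t, θ (t + 1) 0 = θ t 0 + η t * d t * π t 0 * (1 - v t))
    (hupd1 : ∀ t, θ (t + 1) 1 = θ t 1 + η t * d t * π t 1 * (r2 - v t)) :
    ∀ t, (1 - r2) / 2 * min 1 (Real.exp (θ 0 1 - θ 0 0 - m / 2)) ≤ 1 - v t ∧
      0 < (1 - r2) / 2 * min 1 (Real.exp (θ 0 1 - θ 0 0 - m / 2)) := by
  obtain ⟨hr0, hr1⟩ := hr2
  have hpos : 0 < (1 - r2) / 2 * min 1 (Real.exp (θ 0 1 - θ 0 0 - m / 2)) := by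
    apply mul_pos (by linarith)
    exact lt_min one_pos (Real.exp_pos _)
  -- key lemma: Δ_t ≥ Δ_0 - (1/2) partial sum
  have key : ∀ t, θ 0 1 - θ 0 0 - (∑ s ∈ range t, η s * d s) / 2 ≤ θ t 1 - θ t 0 := by
    intro t
    induction t with
    | zero => simp
    | succ t ih =>
      rw [hupd0, hupd1, sum_range_succ]
      set A := Real.exp (θ t 0) with hA
      set B := Real.exp (θ t 1) with hB
      have hApos : 0 < A := Real.exp_pos _
      have hBpos : 0 < B := Real.exp_pos _
      have hS : 0 < A + B := by linarith
      have hπ0 : π t 0 = A / (A + B) := hπ t 0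
      have hπ1 : π t 1 = B / (A + B) := hπ t 1
      have h1v : 1 - v t = B * (1 - r2) / (A + B) := by
        rw [hv, hπ0, hπ1]; field_simp; ring
      have hrv : r2 - v t = A * (r2 - 1) / (A + B) := by
        rw [hv, hπ0, hπ1]; field_simp; ring
      have hηd : 0 < η t * d t := mul_pos (hη t) (hd t)
      have hineq : π t 1 * (r2 - v t) - π t 0 * (1 - v t) ≥ -(1/2) := by
        rw [hπ0, hπ1, h1v, hrv]
        rw [ge_iff_le, div_mul_div_comm, div_mul_div_comm, div_sub_div_same,
          le_div_iff₀ (by positivity)]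
        nlinarith [sq_nonneg (A - B), mul_pos hApos hBpos, sq_nonneg (A + B)]
      nlinarith [mul_le_mul_of_nonneg_left hineq hηd.le]
  intro t
  refine ⟨?_, hpos⟩
  have hsum : (∑ s ∈ range t, η s * d s) ≤ m :=
    sum_le_hasSum (range t) (fun i _ => (mul_pos (hη i) (hd i)).le) hm
  have hΔ : θ 0 1 - θ 0 0 - m / 2 ≤ θ t 1 - θ t 0 := by
    have := key t; linarith
  set A := Real.exp (θ t 0) with hA
  set B := Real.exp (θ t 1) with hB
  have hApos : 0 < A := Real.exp_pos _
  have hBpos : 0 < B := Real.exp_pos _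
  have h1v : 1 - v t = B * (1 - r2) / (A + B) := by
    rw [hv, hπ t 0, hπ t 1]; field_simp; ring
  have hC : Real.exp (θ 0 1 - θ 0 0 - m / 2) ≤ B / A := by
    rw [hA, hB, ← Real.exp_sub]
    exact Real.exp_le_exp.mpr hΔ
  rw [h1v]
  set C := Real.exp (θ 0 1 - θ 0 0 - m / 2) with hCdef
  have hCpos : 0 < C := Real.exp_pos _
  rcases le_total A B with h | h
  · -- B/(A+B) ≥ 1/2
    calc (1 - r2) / 2 * min 1 C ≤ (1 - r2) / 2 * 1 := by
          apply mul_le_mul_of_nonneg_left (min_le_left _ _) (by linarith)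
      _ ≤ B * (1 - r2) / (A + B) := by
          rw [mul_one, div_le_div_iff₀ (by norm_num) (by linarith)]
          nlinarith
  · -- B < A case: B/(A+B) ≥ B/(2A) ≥ C/2
    have hCBA : C ≤ B / A := hC
    calc (1 - r2) / 2 * min 1 C ≤ (1 - r2) / 2 * C := by
          apply mul_le_mul_of_nonneg_left (min_le_right _ _) (by linarith)
      _ ≤ B * (1 - r2) / (A + B) := by
          rw [div_mul_eq_mul_div, div_le_div_iff₀ (by norm_num) (by linarith)]
          have h1 : C * A ≤ B := (le_div_iff₀ hApos).mp hCBA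
          have h2 : C ≤ 1 := hCBA.trans (by rw [div_le_one hApos]; exact h)
          have h3 : C * B ≤ B := by nlinarith
          nlinarith [mul_le_mul_of_nonneg_left h1 (show (0:ℝ) ≤ 1 - r2 by linarith),
            mul_le_mul_of_nonneg_left h3 (show (0:ℝ) ≤ 1 - r2 by linarith)]
  done
end

section
/- Finite-time convergence under the direct parametrization (Theorem 3): for a finite MDP, if Σ_{t=0}^∞ η_t d_t(s) = ∞ for every state s, then under direct-parametrization policy updates with exact value functions there exists t_0 such that for all t ≥ t_0 and all (s,a), q_t(s,a) = q_⋆(s,a). -/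
open Finset Filter

/-!
Projected ascent with exact action values is a policy-improvement scheme: every step raises
the values, which are bounded, so they increase to a limit `vlim`. The optimality condition of
the projection turns a gap `δ` between an action still played and a better one into a value gain
of at least `α δ² / 2`; as `∑ α = ∞` while the total gain is bounded, no such gap can persist.
Hence `vlim` solves the Bellman optimality equation and `q⋆` is its action value. Once the
action values have separated the optimal actions from the others, the iterates reach a policy
supported on optimal actions, and they stay there because the projection puts no mass on an
action whose value is below those of all supported actions; such a policy has value exactly
`vlim`.
-/

open Topology

lemma exists_pos_forall_le_of_pos {ι : Type*} [Finite ι] (f : ι → ℝ) :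
    ∃ δ > 0, ∀ i, 0 < f i → δ ≤ f i := by
  rcases isEmpty_or_nonempty ι with hι | hι
  · exact ⟨1, one_pos, fun i => isEmptyElim i⟩
  obtain ⟨i₀, hi₀⟩ := Finite.exists_min fun i => if 0 < f i then f i else 1
  refine ⟨if 0 < f i₀ then f i₀ else 1, by split_ifs <;> simp_all, fun i hi => ?_⟩
  simpa [hi] using hi₀ i

section Simplex

variable {ι : Type*} [Fintype ι]

lemma sum_mul_le_of_forall_le {x f : ι → ℝ} {c : ℝ} (hx : x ∈ stdSimplex ℝ ι)
    (hf : ∀ i, f i ≤ c) : ∑ i, x i * f i ≤ c :=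
  calc ∑ i, x i * f i ≤ ∑ i, x i * c :=
        sum_le_sum fun i _ => mul_le_mul_of_nonneg_left (hf i) (hx.1 i)
    _ = c := by rw [← sum_mul, hx.2, one_mul]

lemma exists_pos_le_sum_mul {x : ι → ℝ} (hx : x ∈ stdSimplex ℝ ι) (f : ι → ℝ) :
    ∃ i, 0 < x i ∧ f i ≤ ∑ j, x j * f j := by
  by_contra! h
  have hpos : ∃ i, 0 < x i := by
    by_contra! h0
    have : ∑ i, x i = 0 := sum_eq_zero fun i _ => le_antisymm (h0 i) (hx.1 i)
    linarith [hx.2]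
  obtain ⟨i, hi⟩ := hpos
  have hlt : ∑ j, x j * (∑ k, x k * f k) < ∑ j, x j * f j := by
    refine sum_lt_sum (fun j _ => ?_) ⟨i, mem_univ i, mul_lt_mul_of_pos_left (h i hi) hi⟩
    rcases (hx.1 j).eq_or_lt with hj | hj
    · simp [← hj]
    · exact mul_le_mul_of_nonneg_left (h j hj).le hj.le
  rw [← sum_mul, hx.2, one_mul] at hlt
  exact hlt.false

def IsSimplexProj (y x : ι → ℝ) : Prop :=
  x ∈ stdSimplex ℝ ι ∧ IsMinOn (fun w => ∑ i, (w i - y i) ^ 2) (stdSimplex ℝ ι) x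

lemma IsSimplexProj.sum_mul_sub_nonpos {x y w : ι → ℝ} (h : IsSimplexProj y x)
    (hw : w ∈ stdSimplex ℝ ι) : ∑ i, (y i - x i) * (w i - x i) ≤ 0 := by
  set P := ∑ i, (y i - x i) * (w i - x i)
  set Q := ∑ i, (w i - x i) ^ 2
  have hQ : 0 ≤ Q := sum_nonneg fun i _ => sq_nonneg _
  have hseg : ∀ θ ∈ Set.Icc (0 : ℝ) 1, 2 * θ * P ≤ θ ^ 2 * Q := by
    intro θ hθ
    have hmin := isMinOn_iff.1 h.2 _ ((convex_stdSimplex ℝ ι).add_smul_sub_mem h.1 hw hθ)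
    have hexp : ∑ i, ((x + θ • (w - x)) i - y i) ^ 2
        = ∑ i, (x i - y i) ^ 2 - 2 * θ * P + θ ^ 2 * Q := by
      simp only [P, Q, Pi.add_apply, Pi.smul_apply, Pi.sub_apply, smul_eq_mul, mul_sum,
        ← sum_sub_distrib, ← sum_add_distrib]
      exact sum_congr rfl fun i _ => by ring
    simp only [hexp] at hmin
    linarith
  by_contra! hP
  -- the optimal step length `θ = P / (P + Q)` strictly decreases the distance
  have hθ : P / (P + Q) ∈ Set.Icc (0 : ℝ) 1 :=
    ⟨by positivity, (div_le_one (by positivity)).2 (by linarith)⟩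
  have h := hseg _ hθ
  field_simp at h
  nlinarith

lemma IsSimplexProj.sub_le_sub_of_pos {x y : ι → ℝ} (h : IsSimplexProj y x) {i : ι}
    (hi : 0 < x i) (j : ι) : y j - x j ≤ y i - x i := by
  classical
  rcases eq_or_ne i j with rfl | hij
  · exact le_rfl
  -- move all the mass of `x` at `i` to `j`
  set w := x + x i • (Pi.single j 1 - Pi.single i 1)
  have hw : w ∈ stdSimplex ℝ ι := by
    refine ⟨fun k => ?_, ?_⟩
    · rcases eq_or_ne k i with rfl | hki
      · simp [w, hij]
      · have := h.1.1 k
        simp only [w, Pi.add_apply, Pi.smul_apply, Pi.sub_apply, Pi.single_apply, hki,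
          if_false, smul_eq_mul, sub_zero]
        split_ifs <;> nlinarith
    · simp [w, sum_add_distrib, ← mul_sum, sum_sub_distrib, h.1.2]
  have hsum : ∑ k, (y k - x k) * (w k - x k) = x i * ((y j - x j) - (y i - x i)) := by
    simp [w, Pi.single_apply, mul_sub, mul_comm]
  have := h.sum_mul_sub_nonpos hw
  rw [hsum] at this
  nlinarith

variable {x x' q : ι → ℝ} {α : ℝ}

lemma IsSimplexProj.sum_sq_sub_le (hx : x ∈ stdSimplex ℝ ι)
    (h : IsSimplexProj (fun i => x i + α * q i) x') :
    ∑ i, (x' i - x i) ^ 2 ≤ α * ∑ i, (x' i - x i) * q i := by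
  have hvi := h.sum_mul_sub_nonpos hx
  have hexp : ∑ i, (x i + α * q i - x' i) * (x i - x' i)
      = ∑ i, (x' i - x i) ^ 2 - α * ∑ i, (x' i - x i) * q i := by
    rw [mul_sum, ← sum_sub_distrib]
    exact sum_congr rfl fun i _ => by ring
  linarith

lemma IsSimplexProj.sum_sub_mul_nonneg (hx : x ∈ stdSimplex ℝ ι) (hα : 0 < α)
    (h : IsSimplexProj (fun i => x i + α * q i) x') : 0 ≤ ∑ i, (x' i - x i) * q i :=
  nonneg_of_mul_nonneg_right
    ((sum_nonneg fun i _ => sq_nonneg (x' i - x i)).trans (h.sum_sq_sub_le hx)) hα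

lemma IsSimplexProj.mul_sq_le_sum_sub_mul (hx : x ∈ stdSimplex ℝ ι) (hα : 0 < α)
    (h : IsSimplexProj (fun i => x i + α * q i) x') {i j : ι} {δ : ℝ} (hδ : 0 < δ)
    (hi : 0 < x' i) (hij : q i + δ ≤ q j) :
    α * δ ^ 2 / 2 ≤ ∑ k, (x' k - x k) * q k := by
  classical
  have hne : i ≠ j := by rintro rfl; linarith
  have hmove : α * δ ≤ (x' j - x j) - (x' i - x i) := by
    have := h.sub_le_sub_of_pos hi j
    nlinarith
  have hpair : (x' i - x i) ^ 2 + (x' j - x j) ^ 2 ≤ ∑ k, (x' k - x k) ^ 2 := by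
    rw [← sum_pair (f := fun k => (x' k - x k) ^ 2) hne]
    exact sum_le_univ_sum_of_nonneg fun k => sq_nonneg _
  have hsq := h.sum_sq_sub_le hx
  have hαδ : 0 ≤ α * δ := by positivity
  nlinarith [sq_nonneg ((x' i - x i) + (x' j - x j))]

lemma IsSimplexProj.eq_zero_of_forall_le (hx : x ∈ stdSimplex ℝ ι) (hα : 0 ≤ α)
    (h : IsSimplexProj (fun i => x i + α * q i) x') {O : Finset ι}
    (hxO : ∀ i ∉ O, x i = 0) (hqO : ∀ i ∉ O, ∀ j ∈ O, q i ≤ q j) : ∀ i ∉ O, x' i = 0 := by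
  intro i hi
  by_contra hne
  have hpos : 0 < x' i := (h.1.1 i).lt_of_ne' hne
  have hO : ∑ j ∈ O, x j = 1 := by
    rw [← hx.2, ← sum_subset (subset_univ O) fun j _ hj => hxO j hj]
  have hOne : O.Nonempty := nonempty_of_sum_ne_zero (by rw [hO]; exact one_ne_zero)
  -- every action of `O` gains at least the mass `x' i` that `i` received
  have hgain : ∀ j ∈ O, x j < x' j := by
    intro j hj
    have := h.sub_le_sub_of_pos hpos j
    have := mul_le_mul_of_nonneg_left (hqO i hi j hj) hα
    linarith [hxO i hi]
  have : ∑ j ∈ O, x' j ≤ 1 :=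
    h.1.2 ▸ sum_le_univ_sum_of_nonneg fun j => h.1.1 j
  linarith [sum_lt_sum_of_nonempty hOne hgain]

end Simplex

section MDP

lemma isPolicy_iff {S A : Type*} [Fintype A] {π : S → A → ℝ} :
    IsPolicy π ↔ ∀ s, π s ∈ stdSimplex ℝ A :=
  ⟨fun h s => ⟨h.1 s, h.2 s⟩, fun h => ⟨fun s => (h s).1, fun s => (h s).2⟩⟩

variable {S A : Type*} [Fintype S] {p : S → A → S → ℝ} {r : S → A → ℝ} {γ : ℝ}

structure IsDiscountedMDP (p : S → A → S → ℝ) (γ : ℝ) : Prop where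
  transition_mem : ∀ s a, p s a ∈ stdSimplex ℝ S
  discount_nonneg : 0 ≤ γ
  discount_lt_one : γ < 1

def actionValue (p : S → A → S → ℝ) (r : S → A → ℝ) (γ : ℝ) (u : S → ℝ) (s : S) (a : A) : ℝ :=
  r s a + γ * ∑ s', p s a s' * u s'

def bellman [Fintype A] (p : S → A → S → ℝ) (r : S → A → ℝ) (γ : ℝ) (π : S → A → ℝ)
    (u : S → ℝ) (s : S) : ℝ :=
  ∑ a, π s a * actionValue p r γ u s a

lemma continuous_actionValue (s : S) (a : A) : Continuous fun u => actionValue p r γ u s a := by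
  unfold actionValue
  fun_prop

lemma tendsto_actionValue {v : ℕ → S → ℝ} {vlim : S → ℝ}
    (hlim : ∀ s, Tendsto (fun t => v t s) atTop (𝓝 (vlim s)))
    (s : S) (a : A) :
    Tendsto (fun t => actionValue p r γ (v t) s a) atTop (𝓝 (actionValue p r γ vlim s a)) :=
  ((continuous_actionValue s a).tendsto vlim).comp (tendsto_pi_nhds.2 hlim)

lemma actionValue_sub_le (hM : IsDiscountedMDP p γ) {u w : S → ℝ} {m : ℝ}
    (h : ∀ s, u s - w s ≤ m) (s : S) (a : A) :
    actionValue p r γ u s a - actionValue p r γ w s a ≤ γ * m := by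
  have hexp : actionValue p r γ u s a - actionValue p r γ w s a
      = γ * ∑ s', p s a s' * (u s' - w s') := by
    simp only [actionValue, mul_sub, sum_sub_distrib]
    ring
  rw [hexp]
  exact mul_le_mul_of_nonneg_left (sum_mul_le_of_forall_le (hM.transition_mem s a) h)
    hM.discount_nonneg

lemma actionValue_mono (hM : IsDiscountedMDP p γ) {u w : S → ℝ} (h : u ≤ w) (s : S) (a : A) :
    actionValue p r γ u s a ≤ actionValue p r γ w s a := by
  have := actionValue_sub_le (r := r) hM (fun s => sub_nonpos.2 (h s)) s a
  linarith

lemma bellman_sub_le [Fintype A] (hM : IsDiscountedMDP p γ) {π : S → A → ℝ}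
    (hπ : ∀ s, π s ∈ stdSimplex ℝ A)
    {u w : S → ℝ} {m : ℝ} (h : ∀ s, u s - w s ≤ m) (s : S) :
    bellman p r γ π u s - bellman p r γ π w s ≤ γ * m := by
  rw [bellman, bellman, ← sum_sub_distrib]
  simp only [← mul_sub]
  exact sum_mul_le_of_forall_le (hπ s) (actionValue_sub_le hM h s)

lemma bellman_mono [Fintype A] (hM : IsDiscountedMDP p γ) {π : S → A → ℝ}
    (hπ : ∀ s, π s ∈ stdSimplex ℝ A)
    {u w : S → ℝ} (h : u ≤ w) (s : S) : bellman p r γ π u s ≤ bellman p r γ π w s := by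
  have := bellman_sub_le (r := r) hM hπ (fun s => sub_nonpos.2 (h s)) s
  linarith

lemma bellman_eq_of_forall_ne_zero [Fintype A] {π : S → A → ℝ}
    (hπ : ∀ s, π s ∈ stdSimplex ℝ A) {u : S → ℝ} {s : S}
    (h : ∀ a, π s a ≠ 0 → actionValue p r γ u s a = u s) : bellman p r γ π u s = u s := by
  rw [bellman, ← mul_one (u s), ← (hπ s).2, mul_sum]
  refine sum_congr rfl fun a _ => ?_
  by_cases ha : π s a = 0
  · simp [ha]
  · rw [h a ha, mul_comm]

/-- `bellman π` is monotone and a `γ`-contraction in the sup norm, so its sub- and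
supersolutions are ordered. -/
lemma le_of_le_bellman_of_bellman_le [Fintype A] (hM : IsDiscountedMDP p γ) {π : S → A → ℝ}
    (hπ : ∀ s, π s ∈ stdSimplex ℝ A) {u w : S → ℝ} (hu : ∀ s, u s ≤ bellman p r γ π u s)
    (hw : ∀ s, bellman p r γ π w s ≤ w s) : u ≤ w := by
  intro s
  obtain ⟨s₀, -, hs₀⟩ := exists_max_image univ (fun s => u s - w s) ⟨s, mem_univ s⟩
  have hcontr := bellman_sub_le (r := r) hM hπ (fun s => hs₀ s (mem_univ s)) s₀
  have hmax : u s₀ - w s₀ ≤ 0 := by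
    nlinarith [hu s₀, hw s₀, hM.discount_lt_one]
  linarith [hs₀ s (mem_univ s)]

lemma IsValueOf.eq_of_bellman_eq [Fintype A] (hM : IsDiscountedMDP p γ) {π : S → A → ℝ}
    (hπ : ∀ s, π s ∈ stdSimplex ℝ A) {v u : S → ℝ} (hv : IsValueOf p r γ π v)
    (hu : ∀ s, bellman p r γ π u s = u s) : v = u :=
  le_antisymm (le_of_le_bellman_of_bellman_le hM hπ (fun s => (hv s).le) fun s => (hu s).le)
    (le_of_le_bellman_of_bellman_le hM hπ (fun s => (hu s).ge) fun s => (hv s).ge)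

lemma IsValueOf.le_div [Fintype A] (hM : IsDiscountedMDP p γ) {π : S → A → ℝ}
    (hπ : ∀ s, π s ∈ stdSimplex ℝ A) {v : S → ℝ} (hv : IsValueOf p r γ π v) {R : ℝ}
    (hR : ∀ s a, r s a ≤ R) (s : S) : v s ≤ R / (1 - γ) := by
  have h1γ : 0 < 1 - γ := sub_pos.2 hM.discount_lt_one
  refine le_of_le_bellman_of_bellman_le (w := fun _ => R / (1 - γ)) hM hπ (fun s => (hv s).le)
    (fun s => ?_) s
  refine sum_mul_le_of_forall_le (hπ s) fun a => ?_
  rw [actionValue, ← sum_mul, (hM.transition_mem s a).2, one_mul]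
  have : R + γ * (R / (1 - γ)) = R / (1 - γ) := by field_simp; ring
  linarith [hR s a]

/-- The greedy policy attains `vstar`, and by comparison no policy exceeds it. -/
lemma isGreatest_actionValue [Fintype A] (hM : IsDiscountedMDP p γ) {vstar : S → ℝ}
    (hle : ∀ s a, actionValue p r γ vstar s a ≤ vstar s)
    (hex : ∀ s, ∃ a, actionValue p r γ vstar s a = vstar s) (s : S) (a : A) :
    IsGreatest {x | ∃ (π' : S → A → ℝ) (w : S → ℝ), IsPolicy π' ∧ IsValueOf p r γ π' w ∧
      actionValue p r γ w s a = x} (actionValue p r γ vstar s a) := by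
  classical
  choose greedy hgreedy using hex
  have hπ : ∀ s, Pi.single (greedy s) 1 ∈ stdSimplex ℝ A := fun s => single_mem_stdSimplex ℝ _
  refine ⟨⟨fun s => Pi.single (greedy s) 1, vstar, isPolicy_iff.2 hπ, fun s => ?_, rfl⟩, ?_⟩
  · refine (bellman_eq_of_forall_ne_zero hπ fun a ha => ?_).symm
    obtain rfl : a = greedy s := by
      by_contra hne
      simp [hne] at ha
    exact hgreedy s
  · rintro _ ⟨π', w, hπ', hw, rfl⟩
    have hπ' := isPolicy_iff.1 hπ'
    refine actionValue_mono hM (le_of_le_bellman_of_bellman_le hM hπ' (fun s => (hw s).le)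
      fun s => sum_mul_le_of_forall_le (hπ' s) (hle s)) s a

end MDP

lemma not_eventually_mul_le_sub {a f : ℕ → ℝ} {B c : ℝ}
    (ha : Tendsto (fun T => ∑ t ∈ range T, a t) atTop atTop) (hf : ∀ t, f t ≤ B) (hc : 0 < c) :
    ¬ ∀ᶠ t in atTop, c * a t ≤ f (t + 1) - f t := by
  intro h
  obtain ⟨T, hT⟩ := eventually_atTop.1 h
  set g : ℕ → ℝ := fun n => f n - c * ∑ t ∈ range n, a t
  have hg : ∀ n ≥ T, g T ≤ g n := by
    intro n hn
    induction n, hn using Nat.le_induction with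
    | base => exact le_rfl
    | succ n hn ih =>
      have := hT n hn
      simp only [g, sum_range_succ] at ih ⊢
      linarith
  obtain ⟨n, hn, hnT⟩ :=
    ((ha.eventually_gt_atTop ((B - g T) / c)).and (eventually_ge_atTop T)).exists
  have := hg n hnT
  rw [div_lt_iff₀ hc] at hn
  linarith [hf n]

lemma Filter.eventually_atTop_of_frequently_of_eventually_imp {P : ℕ → Prop}
    (hstep : ∀ᶠ n in atTop, P n → P (n + 1)) (hP : ∃ᶠ n in atTop, P n) :
    ∀ᶠ n in atTop, P n := by
  obtain ⟨N, hN⟩ := eventually_atTop.1 hstep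
  obtain ⟨n₀, hn₀, hPn₀⟩ := frequently_atTop.1 hP N
  refine eventually_atTop.2 ⟨n₀, fun n hn => ?_⟩
  induction n, hn using Nat.le_induction with
  | base => exact hPn₀
  | succ n hn ih => exact hN n (hn₀.trans hn) ih

section DirectUpdate

variable {S A : Type*} [Fintype S] [Fintype A] {p : S → A → S → ℝ} {r : S → A → ℝ} {γ : ℝ}
  {α : ℕ → S → ℝ} {π : ℕ → S → A → ℝ} {v : ℕ → S → ℝ}

structure IsDirectPolicyUpdate (p : S → A → S → ℝ) (r : S → A → ℝ) (γ : ℝ) (α : ℕ → S → ℝ)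
    (π : ℕ → S → A → ℝ) (v : ℕ → S → ℝ) : Prop where
  policy : ∀ t s, π t s ∈ stdSimplex ℝ A
  value : ∀ t s, v t s = bellman p r γ (π t) (v t) s
  rate_pos : ∀ t s, 0 < α t s
  proj : ∀ t s, IsSimplexProj (fun a => π t s a + α t s * actionValue p r γ (v t) s a) (π (t + 1) s)

namespace IsDirectPolicyUpdate

lemma bellman_succ (h : IsDirectPolicyUpdate p r γ α π v) (t : ℕ) (s : S) :
    bellman p r γ (π (t + 1)) (v t) s
      = v t s + ∑ a, (π (t + 1) s a - π t s a) * actionValue p r γ (v t) s a := by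
  rw [h.value t s, bellman, bellman, ← sum_add_distrib]
  exact sum_congr rfl fun a _ => by ring

lemma value_le_succ (h : IsDirectPolicyUpdate p r γ α π v) (hM : IsDiscountedMDP p γ) (t : ℕ) :
    v t ≤ v (t + 1) := by
  refine le_of_le_bellman_of_bellman_le hM (h.policy (t + 1)) (fun s => ?_)
    fun s => (h.value (t + 1) s).ge
  rw [h.bellman_succ]
  linarith [(h.proj t s).sum_sub_mul_nonneg (h.policy t s) (h.rate_pos t s)]

lemma monotone_value (h : IsDirectPolicyUpdate p r γ α π v) (hM : IsDiscountedMDP p γ) :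
    Monotone v :=
  monotone_nat_of_le_succ (h.value_le_succ hM)

lemma sum_sub_mul_le (h : IsDirectPolicyUpdate p r γ α π v) (hM : IsDiscountedMDP p γ)
    (t : ℕ) (s : S) :
    ∑ a, (π (t + 1) s a - π t s a) * actionValue p r γ (v t) s a ≤ v (t + 1) s - v t s := by
  have := bellman_mono (r := r) hM (h.policy (t + 1)) (h.value_le_succ hM t) s
  rw [h.bellman_succ, ← h.value (t + 1) s] at this
  linarith

lemma exists_tendsto_value (h : IsDirectPolicyUpdate p r γ α π v) (hM : IsDiscountedMDP p γ) :
    ∃ vlim : S → ℝ, ∀ s, Tendsto (fun t => v t s) atTop (𝓝 (vlim s)) := by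
  obtain ⟨R, hR⟩ := (Set.finite_range (Function.uncurry r)).bddAbove
  have hbdd : ∀ s, BddAbove (Set.range fun t => v t s) := by
    refine fun s => ⟨R / (1 - γ), ?_⟩
    rintro _ ⟨t, rfl⟩
    exact IsValueOf.le_div hM (h.policy t) (h.value t) (fun s a => hR ⟨(s, a), rfl⟩) s
  exact ⟨fun s => ⨆ t, v t s, fun s =>
    tendsto_atTop_ciSup (fun _ _ htt' => h.monotone_value hM htt' s) (hbdd s)⟩

variable {vlim : S → ℝ}

lemma value_le_lim (h : IsDirectPolicyUpdate p r γ α π v) (hM : IsDiscountedMDP p γ)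
    (hlim : ∀ s, Tendsto (fun t => v t s) atTop (𝓝 (vlim s))) (t : ℕ) : v t ≤ vlim :=
  fun s => Monotone.ge_of_tendsto (fun _ _ htt' => h.monotone_value hM htt' s) (hlim s) t

/-- Each such step gains at least `α δ² / 2` in value, while the values are bounded and
`∑ α = ∞`. -/
lemma not_eventually_gap (h : IsDirectPolicyUpdate p r γ α π v) (hM : IsDiscountedMDP p γ)
    (hlim : ∀ s, Tendsto (fun t => v t s) atTop (𝓝 (vlim s))) {s : S}
    (hC4 : Tendsto (fun T => ∑ t ∈ range T, α t s) atTop atTop) {δ : ℝ} (hδ : 0 < δ) :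
    ¬ ∀ᶠ t in atTop, ∃ a b, 0 < π (t + 1) s a ∧
      actionValue p r γ (v t) s a + δ ≤ actionValue p r γ (v t) s b := by
  intro hgap
  refine not_eventually_mul_le_sub hC4 (fun t => h.value_le_lim hM hlim t s)
    (half_pos (pow_pos hδ 2)) ?_
  filter_upwards [hgap] with t ⟨a, b, ha, hab⟩
  have := (h.proj t s).mul_sq_le_sum_sub_mul (h.policy t s) (h.rate_pos t s) hδ ha hab
  have := h.sum_sub_mul_le hM t s
  linarith

lemma actionValue_lim_le (h : IsDirectPolicyUpdate p r γ α π v) (hM : IsDiscountedMDP p γ)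
    (hlim : ∀ s, Tendsto (fun t => v t s) atTop (𝓝 (vlim s)))
    (hC4 : ∀ s, Tendsto (fun T => ∑ t ∈ range T, α t s) atTop atTop) (s : S) (a : A) :
    actionValue p r γ vlim s a ≤ vlim s := by
  by_contra! hlt
  set δ := actionValue p r γ vlim s a - vlim s
  refine h.not_eventually_gap hM hlim (hC4 s) (δ := δ / 2) (by linarith) ?_
  filter_upwards [(tendsto_actionValue hlim s a).eventually
    (eventually_gt_nhds (by linarith : vlim s + δ / 2 < actionValue p r γ vlim s a))] with t ht
  -- some action still played at `t + 1` has value at most `v (t + 1) s ≤ vlim s`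
  obtain ⟨a', ha', hle⟩ := exists_pos_le_sum_mul (h.policy (t + 1) s) (actionValue p r γ (v t) s)
  refine ⟨a', a, ha', ?_⟩
  have hle : actionValue p r γ (v t) s a' ≤ bellman p r γ (π (t + 1)) (v t) s := hle
  have := bellman_mono (r := r) hM (h.policy (t + 1)) (h.value_le_succ hM t) s
  linarith [h.value (t + 1) s, h.value_le_lim hM hlim (t + 1) s]

lemma exists_actionValue_lim_eq [Nonempty A] (h : IsDirectPolicyUpdate p r γ α π v)
    (hM : IsDiscountedMDP p γ) (hlim : ∀ s, Tendsto (fun t => v t s) atTop (𝓝 (vlim s)))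
    (hC4 : ∀ s, Tendsto (fun T => ∑ t ∈ range T, α t s) atTop atTop) (s : S) :
    ∃ a, actionValue p r γ vlim s a = vlim s := by
  obtain ⟨a₀, -, ha₀⟩ := exists_max_image univ (actionValue p r γ vlim s) univ_nonempty
  refine ⟨a₀, le_antisymm (h.actionValue_lim_le hM hlim hC4 s a₀)
    (le_of_tendsto' (hlim s) fun t => ?_)⟩
  calc v t s = bellman p r γ (π t) (v t) s := h.value t s
    _ ≤ bellman p r γ (π t) vlim s := bellman_mono hM (h.policy t) (h.value_le_lim hM hlim t) s
    _ ≤ actionValue p r γ vlim s a₀ :=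
      sum_mul_le_of_forall_le (h.policy t s) fun a => ha₀ a (mem_univ a)

lemma eventually_actionValue_eq_of_ne_zero [Nonempty A] (h : IsDirectPolicyUpdate p r γ α π v)
    (hM : IsDiscountedMDP p γ) (hlim : ∀ s, Tendsto (fun t => v t s) atTop (𝓝 (vlim s)))
    (hC4 : ∀ s, Tendsto (fun T => ∑ t ∈ range T, α t s) atTop atTop) (s : S) :
    ∀ᶠ t in atTop, ∀ a, π t s a ≠ 0 → actionValue p r γ vlim s a = vlim s := by
  classical
  set qlim := actionValue p r γ vlim s
  set O := univ.filter fun a => qlim a = vlim s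
  obtain ⟨b, hb⟩ := h.exists_actionValue_lim_eq hM hlim hC4 s
  obtain ⟨δ, hδ, hgap⟩ := exists_pos_forall_le_of_pos fun a => vlim s - qlim a
  have hclose : ∀ᶠ t in atTop, ∀ a, qlim a - δ / 4 < actionValue p r γ (v t) s a :=
    eventually_all.2 fun a =>
      (tendsto_actionValue hlim s a).eventually (eventually_gt_nhds (by linarith))
  have hsep : ∀ᶠ t in atTop, ∀ a ∉ O, ∀ b ∈ O,
      actionValue p r γ (v t) s a + δ / 2 ≤ actionValue p r γ (v t) s b := by
    filter_upwards [hclose] with t ht a ha b hb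
    have hlt : qlim a < vlim s :=
      (h.actionValue_lim_le hM hlim hC4 s a).lt_of_ne (by simpa [O] using ha)
    have := hgap a (by linarith)
    have := actionValue_mono (r := r) hM (h.value_le_lim hM hlim t) s a
    linarith [ht b, (mem_filter.1 hb).2]
  have hreach : ∃ᶠ t in atTop, ∀ a ∉ O, π t s a = 0 := by
    refine fun hnot => h.not_eventually_gap hM hlim (hC4 s) (half_pos hδ) ?_
    filter_upwards [(tendsto_add_atTop_nat 1).eventually hnot, hsep] with t hnot ht
    push Not at hnot
    obtain ⟨a, ha, hne⟩ := hnot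
    exact ⟨a, b, ((h.policy (t + 1) s).1 a).lt_of_ne' hne, ht a ha b (by simpa [O] using hb)⟩
  have hstay : ∀ᶠ t in atTop, (∀ a ∉ O, π t s a = 0) → ∀ a ∉ O, π (t + 1) s a = 0 := by
    filter_upwards [hsep] with t ht hsupp
    exact (h.proj t s).eq_zero_of_forall_le (h.policy t s) (h.rate_pos t s).le hsupp
      fun a ha b hb => by linarith [ht a ha b hb]
  filter_upwards [eventually_atTop_of_frequently_of_eventually_imp hstay hreach] with t ht a ha
  by_contra hne
  exact ha (ht a (by simpa [O] using hne))

lemma eventually_value_eq [Nonempty A] (h : IsDirectPolicyUpdate p r γ α π v)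
    (hM : IsDiscountedMDP p γ) (hlim : ∀ s, Tendsto (fun t => v t s) atTop (𝓝 (vlim s)))
    (hC4 : ∀ s, Tendsto (fun T => ∑ t ∈ range T, α t s) atTop atTop) :
    ∀ᶠ t in atTop, v t = vlim := by
  filter_upwards [eventually_all.2 (h.eventually_actionValue_eq_of_ne_zero hM hlim hC4)] with t ht
  exact IsValueOf.eq_of_bellman_eq hM (h.policy t) (h.value t) fun s =>
    bellman_eq_of_forall_ne_zero (h.policy t) (ht s)

end IsDirectPolicyUpdate

end DirectUpdate

theorem finite_time_direct_general
    {S A : Type*} [Fintype S] [Fintype A] [Nonempty A]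
    (p : S → A → S → ℝ) (hp : ∀ s a s', 0 ≤ p s a s')
    (hpsum : ∀ s a, ∑ s', p s a s' = 1)
    (r : S → A → ℝ) (γ : ℝ) (hγ0 : 0 ≤ γ) (hγ1 : γ < 1)
    (η : ℕ → ℝ) (hη : ∀ t, 0 < η t)
    (d : ℕ → S → ℝ) (hd : ∀ t s, 0 < d t s)
    (π : ℕ → S → A → ℝ) (hπ : ∀ t, IsPolicy (π t))
    (v : ℕ → S → ℝ) (hv : ∀ t, IsValueOf p r γ (π t) (v t))
    (q : ℕ → S → A → ℝ)
    (hq : ∀ t s a, q t s a = r s a + γ * ∑ s', p s a s' * v t s')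
    -- `π (t+1) (·|s)` is the Euclidean projection of
    -- `π t (·|s) + η t * d t s * q t (s, ·)` onto the simplex:
    (hproj : ∀ t s, ∀ w : A → ℝ, (∀ a, 0 ≤ w a) → ∑ a, w a = 1 →
        ∑ a, (π (t + 1) s a - (π t s a + η t * d t s * q t s a)) ^ 2
          ≤ ∑ a, (w a - (π t s a + η t * d t s * q t s a)) ^ 2)
    -- condition C4:
    (hC4 : ∀ s, Tendsto (fun T => ∑ t ∈ Finset.range T, η t * d t s) atTop atTop)
    -- optimal value `q⋆(s,a) = max_π q_π(s,a)`:
    (qstar : S → A → ℝ)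
    (hqstar : ∀ s a, IsGreatest {x : ℝ | ∃ (π' : S → A → ℝ) (w : S → ℝ),
        IsPolicy π' ∧ IsValueOf p r γ π' w ∧
        r s a + γ * ∑ s', p s a s' * w s' = x} (qstar s a)) :
    ∃ t0 : ℕ, ∀ t ≥ t0, ∀ s a, q t s a = qstar s a := by
  have hM : IsDiscountedMDP p γ := ⟨fun s a => ⟨hp s a, hpsum s a⟩, hγ0, hγ1⟩
  have hupd : IsDirectPolicyUpdate p r γ (fun t s => η t * d t s) π v :=
    { policy := fun t => isPolicy_iff.1 (hπ t)
      value := hv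
      rate_pos := fun t s => mul_pos (hη t) (hd t s)
      proj := fun t s => ⟨isPolicy_iff.1 (hπ (t + 1)) s, isMinOn_iff.2 fun w hw => by
        simpa only [hq, actionValue] using hproj t s w hw.1 hw.2⟩ }
  obtain ⟨vlim, hlim⟩ := hupd.exists_tendsto_value hM
  have hqstar_eq : ∀ s a, qstar s a = actionValue p r γ vlim s a := fun s a =>
    (hqstar s a).unique <| isGreatest_actionValue hM (hupd.actionValue_lim_le hM hlim hC4)
      (hupd.exists_actionValue_lim_eq hM hlim hC4) s a
  obtain ⟨t0, ht0⟩ := eventually_atTop.1 (hupd.eventually_value_eq hM hlim hC4)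
  exact ⟨t0, fun t ht s a => by rw [hq, hqstar_eq, ← ht0 t ht]; rfl⟩

/-- **Finite-time convergence under the direct parametrization** (Theorem 3):
if `Σ_t η_t d_t(s) = ∞` in every state `s` (condition C4), then under
direct-parametrization policy updates with exact value functions there exists
`t₀` such that `q_t = q⋆` for all `t ≥ t₀`. -/
theorem finite_time_direct
    {S A : Type*} [Fintype S] [Nonempty S] [Fintype A] [Nonempty A]
    (p : S → A → S → ℝ) (hp : ∀ s a s', 0 ≤ p s a s')
    (hpsum : ∀ s a, ∑ s', p s a s' = 1)
    (r : S → A → ℝ) (γ : ℝ) (hγ0 : 0 ≤ γ) (hγ1 : γ < 1)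
    (η : ℕ → ℝ) (hη : ∀ t, 0 < η t)
    (d : ℕ → S → ℝ) (hd : ∀ t s, 0 < d t s)
    (π : ℕ → S → A → ℝ) (hπ : ∀ t, IsPolicy (π t))
    (v : ℕ → S → ℝ) (hv : ∀ t, IsValueOf p r γ (π t) (v t))
    (q : ℕ → S → A → ℝ)
    (hq : ∀ t s a, q t s a = r s a + γ * ∑ s', p s a s' * v t s')
    -- `π (t+1) (·|s)` is the Euclidean projection of
    -- `π t (·|s) + η t * d t s * q t (s, ·)` onto the simplex:
    (hproj : ∀ t s, ∀ w : A → ℝ, (∀ a, 0 ≤ w a) → ∑ a, w a = 1 →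
        ∑ a, (π (t + 1) s a - (π t s a + η t * d t s * q t s a)) ^ 2
          ≤ ∑ a, (w a - (π t s a + η t * d t s * q t s a)) ^ 2)
    -- condition C4:
    (hC4 : ∀ s, Tendsto (fun T => ∑ t ∈ Finset.range T, η t * d t s) atTop atTop)
    -- optimal value `q⋆(s,a) = max_π q_π(s,a)`:
    (qstar : S → A → ℝ)
    (hqstar : ∀ s a, IsGreatest {x : ℝ | ∃ (π' : S → A → ℝ) (w : S → ℝ),
        IsPolicy π' ∧ IsValueOf p r γ π' w ∧
        r s a + γ * ∑ s', p s a s' * w s' = x} (qstar s a)) :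
    ∃ t0 : ℕ, ∀ t ≥ t0, ∀ s a, q t s a = qstar s a :=
  finite_time_direct_general p hp hpsum r γ hγ0 hγ1 η hη d hd π hπ v hv q hq hproj hC4 qstar hqstar
end

section
/- Simplex projection lemma (Lemma 1): let x ∈ Δ_n, y ∈ ℝⁿ, and suppose there exist an integer k with 0 < k < n and real numbers α > β such that y_i ≥ α for all i ≤ k and y_i ≤ β for all i > k. Then Σ_{i ≤ k} P_{Δ_n}(x + y)_i ≥ min(1, Σ_{i ≤ k} x_i + (α − β)/2). -/
open Finset

/-- **Simplex projection lemma** (Lemma 1): let `x ∈ Δ_n`, `y ∈ ℝⁿ`, and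
suppose there are `0 < k < n` and `α > β` with `y_i ≥ α` for the first `k`
coordinates and `y_i ≤ β` for the remaining ones. If `z` is the Euclidean
projection of `x + y` onto the simplex `Δ_n`, then
`Σ_{i < k} z_i ≥ min(1, Σ_{i < k} x_i + (α − β)/2)`. -/
theorem simplex_projection_lemma
    (n : ℕ) (x y z : Fin n → ℝ)
    (hx0 : ∀ i, 0 ≤ x i) (hx1 : ∑ i, x i = 1)
    (k : ℕ) (hk0 : 0 < k) (hkn : k < n)
    (α β : ℝ) (hαβ : β < α)
    (hyα : ∀ i : Fin n, (i : ℕ) < k → α ≤ y i)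
    (hyβ : ∀ i : Fin n, k ≤ (i : ℕ) → y i ≤ β)
    -- `z` is the Euclidean projection of `x + y` onto the simplex:
    (hz0 : ∀ i, 0 ≤ z i) (hz1 : ∑ i, z i = 1)
    (hproj : ∀ w : Fin n → ℝ, (∀ i, 0 ≤ w i) → ∑ i, w i = 1 →
      ∑ i, (z i - (x i + y i)) ^ 2 ≤ ∑ i, (w i - (x i + y i)) ^ 2) :
    min 1 ((∑ i ∈ Finset.univ.filter fun i : Fin n => (i : ℕ) < k, x i) + (α - β) / 2)
      ≤ ∑ i ∈ Finset.univ.filter fun i : Fin n => (i : ℕ) < k, z i := by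
  -- variational inequality
  have key : ∀ i j : Fin n, 0 < z j →
      z j - (x j + y j) ≤ z i - (x i + y i) := by
    intro i j hj
    by_cases hij : i = j
    · subst hij; exact le_refl _
    by_contra hlt
    push_neg at hlt
    have hnum : 0 < (z j - (x j + y j) - (z i - (x i + y i))) / 2 := by linarith
    set ε : ℝ := min (z j) ((z j - (x j + y j) - (z i - (x i + y i))) / 2) with hε
    have hε0 : 0 < ε := lt_min hj hnum
    have hεj : ε ≤ z j := min_le_left _ _
    have hεh : ε ≤ (z j - (x j + y j) - (z i - (x i + y i))) / 2 := min_le_right _ _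
    set w : Fin n → ℝ := fun m =>
      z m + ε * ((if m = i then 1 else 0) - (if m = j then 1 else 0)) with hw
    have hw0 : ∀ m, 0 ≤ w m := by
      intro m
      by_cases hmi : m = i
      · simp only [hw, hmi, if_neg hij, eq_self_iff_true, if_true]
        nlinarith [hz0 i]
      · by_cases hmj : m = j
        · simp only [hw, hmj, if_neg (Ne.symm hij), eq_self_iff_true, if_true]
          nlinarith [hεj]
        · simp only [hw, if_neg hmi, if_neg hmj]
          simpa using hz0 m
    have hw1 : ∑ m, w m = 1 := by
      simp only [hw]
      rw [Finset.sum_add_distrib, hz1, ← Finset.mul_sum, Finset.sum_sub_distrib,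
          Finset.sum_ite_eq' Finset.univ i (fun _ => (1:ℝ)),
          Finset.sum_ite_eq' Finset.univ j (fun _ => (1:ℝ))]
      simp
    have hsum := hproj w hw0 hw1
    have hexp : ∑ m, (w m - (x m + y m)) ^ 2
        = ∑ m, (z m - (x m + y m)) ^ 2
          + (2 * ε * (z i - (x i + y i)) + ε ^ 2)
          + (-(2 * ε * (z j - (x j + y j))) + ε ^ 2) := by
      have hpt : ∀ m, (w m - (x m + y m)) ^ 2 = (z m - (x m + y m)) ^ 2
          + (if m = i then 2 * ε * (z i - (x i + y i)) + ε ^ 2 else 0)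
          + (if m = j then -(2 * ε * (z j - (x j + y j))) + ε ^ 2 else 0) := by
        intro m
        by_cases hmi : m = i
        · simp only [hw, hmi, if_neg hij, eq_self_iff_true, if_true]; ring
        · by_cases hmj : m = j
          · simp only [hw, hmj, if_neg (Ne.symm hij), if_neg hmi, eq_self_iff_true,
              if_true]
            ring
          · simp only [hw, if_neg hmi, if_neg hmj]; ring
      rw [Finset.sum_congr rfl (fun m _ => hpt m), Finset.sum_add_distrib,
          Finset.sum_add_distrib, Finset.sum_ite_eq' Finset.univ i,
          Finset.sum_ite_eq' Finset.univ j]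
      simp
    rw [hexp] at hsum
    have hq : 0 ≤ 2 * ε * (z i - (x i + y i)) - 2 * ε * (z j - (x j + y j))
        + 2 * ε ^ 2 := by linarith
    have h2 : 2 * ε ≤ (z j - (x j + y j)) - (z i - (x i + y i)) := by linarith
    have h3 : ε * (2 * ε) ≤ ε * ((z j - (x j + y j)) - (z i - (x i + y i))) :=
      mul_le_mul_of_nonneg_left h2 (le_of_lt hε0)
    have h4 : 0 < ε * ((z j - (x j + y j)) - (z i - (x i + y i))) :=
      mul_pos hε0 (by linarith)
    nlinarith [hq, h3, h4]
  -- main argument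
  set S : Finset (Fin n) := Finset.univ.filter (fun i : Fin n => (i : ℕ) < k) with hS
  set T : Finset (Fin n) := Finset.univ.filter (fun i : Fin n => ¬ (i : ℕ) < k) with hT
  have hST : ∑ i ∈ S, z i + ∑ i ∈ T, z i = 1 := by
    rw [hS, hT, Finset.sum_filter_add_sum_filter_not]; exact hz1
  have hSTx : ∑ i ∈ S, x i + ∑ i ∈ T, x i = 1 := by
    rw [hS, hT, Finset.sum_filter_add_sum_filter_not]; exact hx1
  by_contra hcon
  push_neg at hcon
  have hZ1 : ∑ i ∈ S, z i < 1 := lt_of_lt_of_le hcon (min_le_left _ _)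
  have hZX : ∑ i ∈ S, z i < ∑ i ∈ S, x i + (α - β) / 2 :=
    lt_of_lt_of_le hcon (min_le_right _ _)
  -- exists j in T with z j > 0
  have hTz : 0 < ∑ i ∈ T, z i := by linarith
  have hjex : ∃ j ∈ T, 0 < z j := by
    by_contra h
    push_neg at h
    have : ∑ i ∈ T, z i ≤ 0 := Finset.sum_nonpos h
    linarith
  obtain ⟨j, hjT, hjz⟩ := hjex
  have hjk : k ≤ (j : ℕ) := by
    have := Finset.mem_filter.mp hjT; omega
  -- exists i in S with z i - x i < (α-β)/2
  have hiex : ∃ i ∈ S, z i - x i < (α - β) / 2 := by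
    by_contra h
    push_neg at h
    have h1 : ∑ i ∈ S, ((α - β) / 2) ≤ ∑ i ∈ S, (z i - x i) :=
      Finset.sum_le_sum (fun i hi => h i hi)
    rw [Finset.sum_sub_distrib, Finset.sum_const, nsmul_eq_mul] at h1
    have hi0 : (⟨0, by omega⟩ : Fin n) ∈ S := by
      rw [hS]; simp; omega
    have hcard : 1 ≤ (S.card : ℝ) := by
      have := Finset.card_pos.mpr ⟨_, hi0⟩
      exact_mod_cast this
    nlinarith [hZX]
  obtain ⟨i, hiS, hix⟩ := hiex
  have hik : (i : ℕ) < k := by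
    have := Finset.mem_filter.mp hiS; exact this.2
  have hyi : α ≤ y i := hyα i hik
  -- every m in T satisfies z m ≤ x m, and z j ≤ x j - (α-β)/2
  have hTle : ∀ m ∈ T, z m ≤ x m := by
    intro m hmT
    rcases eq_or_lt_of_le (hz0 m) with h0 | h0
    · rw [← h0]; exact hx0 m
    · have hmk : k ≤ (m : ℕ) := by have := Finset.mem_filter.mp hmT; omega
      have hkey := key i m h0
      have hym : y m ≤ β := hyβ m hmk
      linarith
  have hjle : z j ≤ x j - (α - β) / 2 := by
    have hkey := key i j hjz
    have hyj : y j ≤ β := hyβ j hjk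
    linarith
  -- sum over T
  have hTsum : ∑ m ∈ T, z m ≤ ∑ m ∈ T, x m - (α - β) / 2 := by
    rw [← Finset.add_sum_erase T z hjT, ← Finset.add_sum_erase T x hjT]
    have herase : ∑ m ∈ T.erase j, z m ≤ ∑ m ∈ T.erase j, x m :=
      Finset.sum_le_sum (fun m hm => hTle m (Finset.mem_of_mem_erase hm))
    linarith
  linarith
end

section
/- Logarithmic lower bound for an exponential-damping recursion (intermediate claim in the proof of Theorem 4): let (c_t)_{t≥0} be nonnegative real numbers and (X_t)_{t≥0} real numbers satisfying X_{t+1} = X_t + c_t e^{−X_t} for all t ≥ 0. Then for every t ≥ 0, X_t ≥ log(e^{X_0} + Σ_{t'=0}^{t−1} c_{t'}). -/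
open Finset

/-- **Logarithmic lower bound for an exponential-damping recursion**
(intermediate claim in the proof of Theorem 4): if `X_{t+1} = X_t + c_t e^{−X_t}`
with `c_t ≥ 0`, then `X_t ≥ log(e^{X_0} + Σ_{t' < t} c_{t'})` for every `t`. -/
theorem exp_damping_recursion_log_lower_bound
    (c : ℕ → ℝ) (hc : ∀ t, 0 ≤ c t)
    (X : ℕ → ℝ)
    (hX : ∀ t, X (t + 1) = X t + c t * Real.exp (-X t)) :
    ∀ t, Real.log (Real.exp (X 0) + ∑ t' ∈ Finset.range t, c t') ≤ X t := by
  have key : ∀ t, Real.exp (X 0) + ∑ t' ∈ Finset.range t, c t' ≤ Real.exp (X t) := by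
    intro t
    induction t with
    | zero => simp
    | succ n ih =>
      rw [Finset.sum_range_succ, hX n, Real.exp_add, ← add_assoc]
      have h1 : 1 + c n * Real.exp (-X n) ≤ Real.exp (c n * Real.exp (-X n)) :=
        by linarith [Real.add_one_le_exp (c n * Real.exp (-X n))]
      have h2 : Real.exp (X n) * (1 + c n * Real.exp (-X n))
          ≤ Real.exp (X n) * Real.exp (c n * Real.exp (-X n)) := by
        exact mul_le_mul_of_nonneg_left h1 (Real.exp_pos _).le
      have h3 : Real.exp (X n) * (1 + c n * Real.exp (-X n)) = Real.exp (X n) + c n := by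
        rw [Real.exp_neg]; field_simp
      calc Real.exp (X 0) + ∑ t' ∈ Finset.range n, c t' + c n
          ≤ Real.exp (X n) + c n := by linarith
        _ = Real.exp (X n) * (1 + c n * Real.exp (-X n)) := h3.symm
        _ ≤ _ := h2
  intro t
  have hpos : 0 < Real.exp (X 0) + ∑ t' ∈ Finset.range t, c t' :=
    add_pos_of_pos_of_nonneg (Real.exp_pos _) (Finset.sum_nonneg fun i _ => hc i)
  exact (Real.log_le_iff_le_exp hpos).mpr (key t)
end

section
/- O(1/t) decay for a quadratically damped recursion (induction step in the proof of Theorem 5): let (δ_t)_{t≥1} be nonnegative real numbers and (K_t)_{t≥1} positive real numbers such that δ_{t+1} ≤ δ_t − K_t δ_t² for all t ≥ 1 and δ_1 ≤ 1/(2 K_1). Then for all t ≥ 1, δ_t ≤ 1 / (t · min_{1 ≤ i ≤ t} K_i). -/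
open Finset

/-- **O(1/t) decay for a quadratically damped recursion** (induction step in
the proof of Theorem 5): if `δ_{t+1} ≤ δ_t − K_t δ_t²` with `δ_t ≥ 0`,
`K_t > 0` for `t ≥ 1`, and `δ_1 ≤ 1/(2 K_1)`, then for all `t ≥ 1`,
`δ_t ≤ 1 / (t · min_{1 ≤ i ≤ t} K_i)`. -/
theorem quadratic_damping_decay
    (δ K : ℕ → ℝ)
    (hδ : ∀ t, 1 ≤ t → 0 ≤ δ t)
    (hK : ∀ t, 1 ≤ t → 0 < K t)
    (hrec : ∀ t, 1 ≤ t → δ (t + 1) ≤ δ t - K t * δ t ^ 2)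
    (hinit : δ 1 ≤ 1 / (2 * K 1)) :
    ∀ t, (ht : 1 ≤ t) →
      δ t ≤ 1 / ((t : ℝ) * (Finset.Icc 1 t).inf' (Finset.nonempty_Icc.mpr ht) K) := by
  have hinfpos : ∀ t (ht : 1 ≤ t), 0 < (Finset.Icc 1 t).inf' (Finset.nonempty_Icc.mpr ht) K := by
    intro t ht
    rw [Finset.lt_inf'_iff]
    intro i hi
    exact hK i (Finset.mem_Icc.mp hi).1
  intro t
  induction t with
  | zero => intro h; omega
  | succ n ih =>
    intro ht
    by_cases hn : 1 ≤ n
    · set m := (Finset.Icc 1 (n+1)).inf' (Finset.nonempty_Icc.mpr ht) K with hm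
      have hmpos : 0 < m := hinfpos _ ht
      set mn := (Finset.Icc 1 n).inf' (Finset.nonempty_Icc.mpr hn) K with hmn
      have hmnpos : 0 < mn := hinfpos _ hn
      have hmle : m ≤ mn := by
        apply Finset.inf'_mono
        intro i hi
        simp only [Finset.mem_Icc] at *
        omega
      have hmK : m ≤ K n := by
        apply Finset.inf'_le
        simp only [Finset.mem_Icc]
        omega
      have ha : 0 ≤ δ n := hδ n hn
      have h1 : δ (n+1) ≤ δ n - m * δ n ^ 2 := by
        have := hrec n hn
        nlinarith [sq_nonneg (δ n)]
      have hbound : δ n ≤ 1 / ((n : ℝ) * mn) := ih hn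
      have hNpos : (1 : ℝ) ≤ (n : ℝ) := by exact_mod_cast hn
      have hb2 : δ n * ((n : ℝ) * mn) ≤ 1 := by
        rw [le_div_iff₀ (by positivity)] at hbound
        exact hbound
      rw [le_div_iff₀ (by positivity)]
      push_cast
      by_cases hcase : m * δ n ≤ 1 / ((n : ℝ) + 1)
      · have hc1 : m * δ n * ((n : ℝ) + 1) ≤ 1 := by
          rw [le_div_iff₀ (by positivity)] at hcase
          exact hcase
        have h2 : δ (n+1) ≤ δ n := by
          have := hrec n hn
          nlinarith [mul_nonneg (hK n hn).le (sq_nonneg (δ n))]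
        have hcpos : (0:ℝ) < ((n:ℝ) + 1) * m := by positivity
        nlinarith [mul_le_mul_of_nonneg_right h2 hcpos.le]
      · push_neg at hcase
        have hgt : 1 ≤ ((n : ℝ) + 1) * (m * δ n) := by
          rw [div_lt_iff₀ (by positivity)] at hcase
          nlinarith
        have hma : m * δ n ≤ mn * δ n := by nlinarith
        have hcpos : (0:ℝ) < ((n:ℝ) + 1) * m := by positivity
        nlinarith [mul_le_mul_of_nonneg_right h1 hcpos.le,
          mul_nonneg (sub_nonneg.mpr hgt) (mul_nonneg hmpos.le ha),
          mul_le_mul_of_nonneg_left hma (by positivity : (0:ℝ) ≤ (n:ℝ))]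
    · have hn0 : n = 0 := by omega
      subst hn0
      have hK1 : 0 < K 1 := hK 1 le_rfl
      have h2 : δ 1 * (2 * K 1) ≤ 1 := by
        rw [le_div_iff₀ (by positivity)] at hinit
        exact hinit
      simp only [Finset.Icc_self, Finset.inf'_singleton]
      rw [le_div_iff₀ (by positivity)]
      push_cast
      nlinarith [hδ 1 le_rfl]
end
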